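/- arXiv:1902.01701 — 13 statements merged into one kernel-verified Lean document; each statement's English description precedes it below -/
import Mathlib

section
/- Suppose the family {f_e} has concave ratio γ ∈ [0,1]. Then for every path p, every pair of budget vectors x ≤ y, and every unit vector s, one has r(p, x+s) - r(p, x) ≥ γ·(r(p, y+s) - r(p, y)) as real numbers. -/
/-- `r(p,x) = min(T, ∑_{e∈p} f_e(x(e)))`, as a real number. -/
noncomputable def rPath {E : Type*} (f : E → ℕ → ℕ) (T : ℕ) (p : Finset E) (x : E → ℕ) : ℝ :=
  min (T : ℝ) (∑ e ∈ p, (f e (x e) : ℝ))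

/-- The family `{f_e}` has concave ratio `γ`. -/
def HasConcaveRatio {E : Type*} (f : E → ℕ → ℕ) (γ : ℝ) : Prop :=
  ∀ e : E, ∀ a b : ℕ, a ≤ b →
    γ * ((f e (b + 1) : ℝ) - (f e b : ℝ)) ≤ (f e (a + 1) : ℝ) - (f e a : ℝ)

/-- A unit vector: value 1 at exactly one edge and 0 elsewhere. -/
def IsUnitVec {E : Type*} [DecidableEq E] (s : E → ℕ) : Prop :=
  ∃ e₀ : E, s = Pi.single e₀ 1

lemma min_diff_key (T A B d D γ : ℝ) (hAB : A ≤ B) (hd : 0 ≤ d) (hD : 0 ≤ D)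
    (hγ0 : 0 ≤ γ) (hγ1 : γ ≤ 1) (hγdD : γ * D ≤ d) :
    γ * (min T (B + D) - min T B) ≤ min T (A + d) - min T A := by
  rcases le_total T A with h1 | h1 <;> rcases le_total T B with h2 | h2 <;>
    rcases le_total T (A + d) with h3 | h3 <;> rcases le_total T (B + D) with h4 | h4 <;>
    simp [min_eq_left, min_eq_right, *] <;> nlinarith

/-!
STATEMENT 1: For every path `p`, budget vectors `x ≤ y` and unit vector `s`,
`r(p, x+s) - r(p, x) ≥ γ·(r(p, y+s) - r(p, y))`.
-/

theorem stmt_1 {E : Type*} [Fintype E] [Nonempty E] [DecidableEq E]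
    (f : E → ℕ → ℕ) (hf : ∀ e, Monotone (f e)) (T : ℕ) (hT : 1 ≤ T)
    (γ : ℝ) (hγ0 : 0 ≤ γ) (hγ1 : γ ≤ 1) (hconc : HasConcaveRatio f γ)
    (p : Finset E) (x y : E → ℕ) (hxy : x ≤ y)
    (s : E → ℕ) (hs : IsUnitVec s) :
    γ * (rPath f T p (y + s) - rPath f T p y) ≤ rPath f T p (x + s) - rPath f T p x := by
  obtain ⟨e₀, rfl⟩ := hs
  by_cases he₀ : e₀ ∈ p
  · have hsum : ∀ z : E → ℕ, ∑ e ∈ p, (f e (z e + (Pi.single e₀ 1 : E → ℕ) e) : ℝ)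
        = (∑ e ∈ p, (f e (z e) : ℝ)) + ((f e₀ (z e₀ + 1) : ℝ) - (f e₀ (z e₀) : ℝ)) := by
      intro z
      rw [← Finset.add_sum_erase _ _ he₀, ← Finset.add_sum_erase _ (fun e => (f e (z e) : ℝ)) he₀]
      have h1 : ∀ e ∈ p.erase e₀, (f e (z e + (Pi.single e₀ 1 : E → ℕ) e) : ℝ) = (f e (z e) : ℝ) := by
        intro e he
        have : e ≠ e₀ := Finset.ne_of_mem_erase he
        simp [Pi.single_eq_of_ne this]
      rw [Finset.sum_congr rfl h1]
      simp [Pi.single_eq_same]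
      ring
    have hd : ∀ z : E → ℕ, (0:ℝ) ≤ (f e₀ (z e₀ + 1) : ℝ) - (f e₀ (z e₀) : ℝ) := by
      intro z
      have := hf e₀ (Nat.le_succ (z e₀))
      simp only [sub_nonneg, Nat.cast_le]
      exact this
    have hAB : (∑ e ∈ p, (f e (x e) : ℝ)) ≤ ∑ e ∈ p, (f e (y e) : ℝ) := by
      apply Finset.sum_le_sum
      intro e _
      exact_mod_cast hf e (hxy e)
    simp only [rPath, Pi.add_apply, hsum]
    exact min_diff_key _ _ _ _ _ _ hAB (hd x) (hd y) hγ0 hγ1 (hconc e₀ (x e₀) (y e₀) (hxy e₀))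
  · have hsum : ∀ z : E → ℕ, ∑ e ∈ p, (f e (z e + (Pi.single e₀ 1 : E → ℕ) e) : ℝ)
        = ∑ e ∈ p, (f e (z e) : ℝ) := by
      intro z
      apply Finset.sum_congr rfl
      intro e he
      have : e ≠ e₀ := fun h => he₀ (h ▸ he)
      simp [Pi.single_eq_of_ne this]
    simp only [rPath, Pi.add_apply, hsum]; simp
end

section
/- Suppose the family {f_e} has concave ratio γ ∈ [0,1], and let g(x) = ∑_{p∈P} β_p·r(p,x) for a finite collection P of paths and nonnegative real coefficients (β_p). Then for every pair of budget vectors x ≤ y and every unit vector s, one has g(x+s) - g(x) ≥ γ·(g(y+s) - g(y)). -/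
/-- `g(x) = ∑_{p∈P} β_p · r(p,x)`. -/
noncomputable def gComb {E : Type*} (f : E → ℕ → ℕ) (T : ℕ) (P : Finset (Finset E))
    (β : Finset E → ℝ) (x : E → ℕ) : ℝ :=
  ∑ p ∈ P, β p * rPath f T p x

lemma min_diff_lemma (T Sx Sxa Sy Sya γ : ℝ) (hγ0 : 0 ≤ γ) (hγ1 : γ ≤ 1)
    (hx : Sx ≤ Sxa) (hy : Sy ≤ Sya) (hxy : Sx ≤ Sy)
    (hΔ : γ * (Sya - Sy) ≤ Sxa - Sx) :
    γ * (min T Sya - min T Sy) ≤ min T Sxa - min T Sx := by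
  rcases min_cases T Sx with ⟨e1, l1⟩ | ⟨e1, l1⟩ <;>
  rcases min_cases T Sy with ⟨e2, l2⟩ | ⟨e2, l2⟩ <;>
  rcases min_cases T Sxa with ⟨e3, l3⟩ | ⟨e3, l3⟩ <;>
  rcases min_cases T Sya with ⟨e4, l4⟩ | ⟨e4, l4⟩ <;>
  rw [e1, e2, e3, e4] <;>
  nlinarith [mul_nonneg hγ0 (sub_nonneg.2 hy), mul_le_mul_of_nonneg_left hy hγ0,
    mul_le_mul_of_nonneg_left hxy hγ0, mul_nonneg (sub_nonneg.2 hγ1) (sub_nonneg.2 hy)]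

/-!
STATEMENT 2: For every pair of budget vectors `x ≤ y` and every unit vector `s`,
`g(x+s) - g(x) ≥ γ·(g(y+s) - g(y))`.
-/

theorem stmt_2 {E : Type*} [Fintype E] [Nonempty E] [DecidableEq E]
    (f : E → ℕ → ℕ) (hf : ∀ e, Monotone (f e)) (T : ℕ) (hT : 1 ≤ T)
    (γ : ℝ) (hγ0 : 0 ≤ γ) (hγ1 : γ ≤ 1) (hconc : HasConcaveRatio f γ)
    (P : Finset (Finset E)) (β : Finset E → ℝ) (hβ : ∀ p ∈ P, 0 ≤ β p)
    (x y : E → ℕ) (hxy : x ≤ y)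
    (s : E → ℕ) (hs : IsUnitVec s) :
    γ * (gComb f T P β (y + s) - gComb f T P β y) ≤
      gComb f T P β (x + s) - gComb f T P β x := by
  obtain ⟨e₀, rfl⟩ := hs
  -- pathwise inequality
  have key : ∀ p : Finset E,
      γ * (rPath f T p (y + Pi.single e₀ 1) - rPath f T p y) ≤
        rPath f T p (x + Pi.single e₀ 1) - rPath f T p x := by
    intro p
    unfold rPath
    apply min_diff_lemma
    · exact hγ0
    · exact hγ1
    · apply Finset.sum_le_sum; intro e _
      exact_mod_cast hf e (Nat.le_add_right _ _)
    · apply Finset.sum_le_sum; intro e _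
      exact_mod_cast hf e (Nat.le_add_right _ _)
    · apply Finset.sum_le_sum; intro e _
      exact_mod_cast hf e (hxy e)
    · rw [← Finset.sum_sub_distrib, ← Finset.sum_sub_distrib, Finset.mul_sum]
      apply Finset.sum_le_sum
      intro e _
      by_cases he : e = e₀
      · subst he
        simp only [Pi.add_apply, Pi.single_eq_same]
        exact hconc e (x e) (y e) (hxy e)
      · simp only [Pi.add_apply, Pi.single_eq_of_ne he, Nat.add_zero]
        simp
  unfold gComb
  rw [← Finset.sum_sub_distrib, ← Finset.sum_sub_distrib, Finset.mul_sum]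
  apply Finset.sum_le_sum
  intro p hp
  have := key p
  calc γ * (β p * rPath f T p (y + Pi.single e₀ 1) - β p * rPath f T p y)
      = β p * (γ * (rPath f T p (y + Pi.single e₀ 1) - rPath f T p y)) := by ring
    _ ≤ β p * (rPath f T p (x + Pi.single e₀ 1) - rPath f T p x) :=
        mul_le_mul_of_nonneg_left this (hβ p hp)
    _ = β p * rPath f T p (x + Pi.single e₀ 1) - β p * rPath f T p x := by ring
end

section
/- Suppose the family {f_e} has concave ratio γ ∈ [0,1], and let g(x) = ∑_{p∈P} β_p·r(p,x) for a finite collection P of paths and nonnegative real coefficients (β_p). Then for every pair of budget vectors x ≤ y and every budget vector z, one has g(x+z) - g(x) ≥ γ·(g(y+z) - g(y)). -/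
/-- Telescoped concave-ratio inequality over an increment of `n`. -/
lemma concave_telescope {E : Type*} (f : E → ℕ → ℕ) (γ : ℝ)
    (hconc : HasConcaveRatio f γ) (e : E) (a b n : ℕ) (hab : a ≤ b) :
    γ * ((f e (b + n) : ℝ) - (f e b : ℝ)) ≤ (f e (a + n) : ℝ) - (f e a : ℝ) := by
  induction n with
  | zero => simp
  | succ n ih =>
    have h := hconc e (a + n) (b + n) (by omega)
    have ha : a + (n + 1) = (a + n) + 1 := by omega
    have hb : b + (n + 1) = (b + n) + 1 := by omega
    rw [ha, hb]
    nlinarith [h, ih]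

/-- Truncation lemma for `min`. -/
lemma min_trunc (T sx sy dx dy γ : ℝ) (hs : sx ≤ sy) (hdy : 0 ≤ dy)
    (h : γ * dy ≤ dx) (hγ0 : 0 ≤ γ) (hγ1 : γ ≤ 1) :
    γ * (min T (sy + dy) - min T sy) ≤ min T (sx + dx) - min T sx := by
  have ha0 : 0 ≤ min T (sy + dy) - min T sy := by
    have := min_le_min (le_refl T) (by linarith : sy ≤ sy + dy)
    linarith
  have haup : min T (sy + dy) - min T sy ≤ dy := by
    have h1 : min T (sy + dy) ≤ min (T + dy) (sy + dy) :=
      min_le_min (by linarith) le_rfl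
    have h2 : min (T + dy) (sy + dy) = min T sy + dy := by
      rw [← min_add_add_right]
    linarith
  rcases le_or_gt (sx + dx) T with hc | hc
  · have hdx : 0 ≤ dx := le_trans (by positivity) h
    rw [min_eq_right hc, min_eq_right (by linarith : sx ≤ T)]
    nlinarith
  · rw [min_eq_left (le_of_lt hc)]
    have h1 : min T (sy + dy) ≤ T := min_le_left _ _
    have h2 : min T sx ≤ min T sy := min_le_min le_rfl hs
    nlinarith

theorem stmt_3 {E : Type*} [Fintype E] [Nonempty E] [DecidableEq E]
    (f : E → ℕ → ℕ) (hf : ∀ e, Monotone (f e)) (T : ℕ) (hT : 1 ≤ T)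
    (γ : ℝ) (hγ0 : 0 ≤ γ) (hγ1 : γ ≤ 1) (hconc : HasConcaveRatio f γ)
    (P : Finset (Finset E)) (β : Finset E → ℝ) (hβ : ∀ p ∈ P, 0 ≤ β p)
    (x y z : E → ℕ) (hxy : x ≤ y) :
    γ * (gComb f T P β (y + z) - gComb f T P β y) ≤
      gComb f T P β (x + z) - gComb f T P β x := by
  unfold gComb
  rw [← Finset.sum_sub_distrib, ← Finset.sum_sub_distrib, Finset.mul_sum]
  apply Finset.sum_le_sum
  intro p hp
  rw [← mul_sub, ← mul_sub, ← mul_assoc, mul_comm γ (β p), mul_assoc]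
  apply mul_le_mul_of_nonneg_left _ (hβ p hp)
  -- per-path inequality
  unfold rPath
  set Sx := ∑ e ∈ p, (f e (x e) : ℝ) with hSx
  set Sy := ∑ e ∈ p, (f e (y e) : ℝ) with hSy
  have hxz : ∀ e, ((x + z) : E → ℕ) e = x e + z e := fun e => rfl
  have hyz : ∀ e, ((y + z) : E → ℕ) e = y e + z e := fun e => rfl
  have hSxz : ∑ e ∈ p, (f e ((x + z) e) : ℝ) =
      Sx + (∑ e ∈ p, ((f e (x e + z e) : ℝ) - f e (x e))) := by
    simp [hSx, Finset.sum_sub_distrib]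
  have hSyz : ∑ e ∈ p, (f e ((y + z) e) : ℝ) =
      Sy + (∑ e ∈ p, ((f e (y e + z e) : ℝ) - f e (y e))) := by
    simp [hSy, Finset.sum_sub_distrib]
  rw [hSxz, hSyz]
  apply min_trunc _ _ _ _ _ _ _ _ _ hγ0 hγ1
  · exact Finset.sum_le_sum fun e _ => by
      exact_mod_cast hf e (hxy e)
  · exact Finset.sum_nonneg fun e _ => by
      have : f e (y e) ≤ f e (y e + z e) := hf e (by omega)
      have := (Nat.cast_le (α := ℝ)).2 this
      linarith
  · rw [Finset.mul_sum]
    exact Finset.sum_le_sum fun e _ =>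
      concave_telescope f γ hconc e (x e) (y e) (z e) (hxy e)
end

section
/- Suppose the family {f_e} has concave ratio γ with 0 < γ ≤ 1, and let g(x) = ∑_{p∈P} β_p·r(p,x) for a finite collection P of paths and nonnegative real coefficients (β_p). Then for all budget vectors x and y, g(x+y) - g(x) ≤ (‖y‖/γ)·max_{s unit vector} (g(x+s) - g(x)). -/
/-!
STATEMENT 4: For all budget vectors `x` and `y`,
`g(x+y) - g(x) ≤ (‖y‖/γ) · max over unit vectors s of (g(x+s) - g(x))`.
The unit vectors are exactly `Pi.single e₀ 1` for `e₀ ∈ E`, so the maximum is taken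
over all edges `e₀`.
-/


lemma min_step {T S S' d d' γ : ℝ} (hγ0 : 0 ≤ γ) (hγ1 : γ ≤ 1) (hS : S ≤ S')
    (hd : 0 ≤ d) (hd' : 0 ≤ d') (hdd : γ * d' ≤ d) :
    γ * (min T (S' + d') - min T S') ≤ min T (S + d) - min T S := by
  simp only [min_def]
  split_ifs <;> nlinarith [mul_nonneg hγ0 hd', mul_le_of_le_one_left (sub_nonneg.mpr hS) hγ1]

lemma single_sum {E : Type*} [DecidableEq E] (f : E → ℕ → ℕ) (p : Finset E) (w : E → ℕ)
    (e₀ : E) (h : e₀ ∈ p) :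
    (∑ e ∈ p, (f e ((w + Pi.single e₀ 1 : E → ℕ) e) : ℝ)) =
      (∑ e ∈ p.erase e₀, (f e (w e) : ℝ)) + (f e₀ (w e₀ + 1) : ℝ) := by
  rw [← Finset.add_sum_erase p _ h]
  have h1 : (w + Pi.single e₀ 1 : E → ℕ) e₀ = w e₀ + 1 := by simp [Pi.single_apply]
  have h2 : ∀ e ∈ p.erase e₀, (f e ((w + Pi.single e₀ 1 : E → ℕ) e) : ℝ) = (f e (w e) : ℝ) := by
    intro e he
    have : e ≠ e₀ := Finset.ne_of_mem_erase he
    simp [Pi.single_apply, this]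
  rw [Finset.sum_congr rfl h2, h1]
  ring

lemma rstep {E : Type*} [DecidableEq E] (f : E → ℕ → ℕ) (hf : ∀ e, Monotone (f e)) (T : ℕ)
    (γ : ℝ) (hγ0 : 0 < γ) (hγ1 : γ ≤ 1) (hconc : HasConcaveRatio f γ)
    (p : Finset E) (x z : E → ℕ) (hxz : ∀ e, x e ≤ z e) (e₀ : E) :
    γ * (rPath f T p (z + Pi.single e₀ 1) - rPath f T p z) ≤
      rPath f T p (x + Pi.single e₀ 1) - rPath f T p x := by
  by_cases h : e₀ ∈ p
  · unfold rPath
    rw [single_sum f p z e₀ h, single_sum f p x e₀ h]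
    have hx : (∑ e ∈ p, (f e (x e) : ℝ)) = (∑ e ∈ p.erase e₀, (f e (x e) : ℝ)) + (f e₀ (x e₀) : ℝ) := by
      rw [← Finset.add_sum_erase p _ h]; ring
    have hz : (∑ e ∈ p, (f e (z e) : ℝ)) = (∑ e ∈ p.erase e₀, (f e (z e) : ℝ)) + (f e₀ (z e₀) : ℝ) := by
      rw [← Finset.add_sum_erase p _ h]; ring
    rw [hx, hz]
    have key := min_step (T := (T:ℝ))
      (S := (∑ e ∈ p.erase e₀, (f e (x e) : ℝ)) + (f e₀ (x e₀) : ℝ))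
      (S' := (∑ e ∈ p.erase e₀, (f e (z e) : ℝ)) + (f e₀ (z e₀) : ℝ))
      (d := (f e₀ (x e₀ + 1) : ℝ) - (f e₀ (x e₀) : ℝ))
      (d' := (f e₀ (z e₀ + 1) : ℝ) - (f e₀ (z e₀) : ℝ))
      hγ0.le hγ1
      (by
        gcongr with e he
        · exact_mod_cast hf e (hxz e)
        · exact_mod_cast hf e₀ (hxz e₀))
      (by have := hf e₀ (Nat.le_succ (x e₀)); simp only [sub_nonneg]; exact_mod_cast this)
      (by have := hf e₀ (Nat.le_succ (z e₀)); simp only [sub_nonneg]; exact_mod_cast this)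
      (hconc e₀ (x e₀) (z e₀) (hxz e₀))
    convert key using 3 <;> ring
  · have hx : rPath f T p (x + Pi.single e₀ 1) = rPath f T p x := by
      unfold rPath
      congr 1
      apply Finset.sum_congr rfl
      intro e he
      have : e ≠ e₀ := fun hh => h (hh ▸ he)
      simp [Pi.single_apply, this]
    have hz : rPath f T p (z + Pi.single e₀ 1) = rPath f T p z := by
      unfold rPath
      congr 1
      apply Finset.sum_congr rfl
      intro e he
      have : e ≠ e₀ := fun hh => h (hh ▸ he)
      simp [Pi.single_apply, this]
    rw [hx, hz]
    simp

lemma gstep {E : Type*} [DecidableEq E] (f : E → ℕ → ℕ) (hf : ∀ e, Monotone (f e)) (T : ℕ)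
    (γ : ℝ) (hγ0 : 0 < γ) (hγ1 : γ ≤ 1) (hconc : HasConcaveRatio f γ)
    (P : Finset (Finset E)) (β : Finset E → ℝ) (hβ : ∀ p ∈ P, 0 ≤ β p)
    (x z : E → ℕ) (hxz : ∀ e, x e ≤ z e) (e₀ : E) :
    γ * (gComb f T P β (z + Pi.single e₀ 1) - gComb f T P β z) ≤
      gComb f T P β (x + Pi.single e₀ 1) - gComb f T P β x := by
  unfold gComb
  rw [← Finset.sum_sub_distrib, ← Finset.sum_sub_distrib, Finset.mul_sum]
  apply Finset.sum_le_sum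
  intro p hp
  have h1 := rstep f hf T γ hγ0 hγ1 hconc p x z hxz e₀
  have h2 := hβ p hp
  calc γ * (β p * rPath f T p (z + Pi.single e₀ 1) - β p * rPath f T p z)
      = β p * (γ * (rPath f T p (z + Pi.single e₀ 1) - rPath f T p z)) := by ring
    _ ≤ β p * (rPath f T p (x + Pi.single e₀ 1) - rPath f T p x) := by
        exact mul_le_mul_of_nonneg_left h1 h2
    _ = β p * rPath f T p (x + Pi.single e₀ 1) - β p * rPath f T p x := by ring

set_option maxHeartbeats 1000000 in
theorem stmt_4 {E : Type*} [Fintype E] [Nonempty E] [DecidableEq E]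
    (f : E → ℕ → ℕ) (hf : ∀ e, Monotone (f e)) (T : ℕ) (hT : 1 ≤ T)
    (γ : ℝ) (hγ0 : 0 < γ) (hγ1 : γ ≤ 1) (hconc : HasConcaveRatio f γ)
    (P : Finset (Finset E)) (β : Finset E → ℝ) (hβ : ∀ p ∈ P, 0 ≤ β p)
    (x y : E → ℕ) :
    gComb f T P β (x + y) - gComb f T P β x ≤
      ((∑ e, y e : ℕ) : ℝ) / γ *
        (Finset.univ.sup' Finset.univ_nonempty
          (fun e₀ : E => gComb f T P β (x + Pi.single e₀ 1) - gComb f T P β x)) := by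
  have hle : ∀ e₀ : E, gComb f T P β (x + Pi.single e₀ 1) - gComb f T P β x ≤
      Finset.univ.sup' Finset.univ_nonempty
        (fun e₁ : E => gComb f T P β (x + Pi.single e₁ 1) - gComb f T P β x) := by
    intro e₀
    apply Finset.le_sup' (fun e₁ : E => gComb f T P β (x + Pi.single e₁ 1) - gComb f T P β x) (Finset.mem_univ e₀)
  set M := Finset.univ.sup' Finset.univ_nonempty
      (fun e₁ : E => gComb f T P β (x + Pi.single e₁ 1) - gComb f T P β x) with hM
  have stepM : ∀ (z : E → ℕ) (e₀ : E), (∀ e, x e ≤ z e) →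
      gComb f T P β (z + Pi.single e₀ 1) - gComb f T P β z ≤ M / γ := by
    intro z e₀ hxz
    rw [le_div_iff₀ hγ0, mul_comm]
    calc γ * (gComb f T P β (z + Pi.single e₀ 1) - gComb f T P β z)
        ≤ gComb f T P β (x + Pi.single e₀ 1) - gComb f T P β x :=
          gstep f hf T γ hγ0 hγ1 hconc P β hβ x z hxz e₀
      _ ≤ M := hle e₀
  have key : ∀ (n : ℕ) (y : E → ℕ), (∑ e, y e) = n →
      gComb f T P β (x + y) - gComb f T P β x ≤ (n : ℝ) / γ * M := by
    intro n
    induction n with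
    | zero =>
      intro y hy
      have : y = 0 := by
        funext e
        exact (Finset.sum_eq_zero_iff.mp hy) e (Finset.mem_univ e)
      subst this
      simp
    | succ n ih =>
      intro y hy
      have hex : ∃ e, y e ≠ 0 := by
        by_contra hh
        push_neg at hh
        simp [hh] at hy
      obtain ⟨e, he⟩ := hex
      set y' : E → ℕ := Function.update y e (y e - 1) with hy'
      have hdecomp : y = y' + Pi.single e 1 := by
        funext e'
        by_cases h : e' = e
        · subst h
          simp [hy', Function.update_self, Pi.single_apply]
          omega
        · simp [hy', Function.update_of_ne h, Pi.single_apply, h]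
      have hsum' : (∑ e', y' e') = n := by
        have : (∑ e', y e') = (∑ e', y' e') + 1 := by
          rw [hdecomp]
          simp [Finset.sum_add_distrib, Finset.sum_pi_single]
        omega
      have hIH := ih y' hsum'
      have hxz : ∀ e', x e' ≤ x e' + y' e' := fun e' => Nat.le_add_right _ _
      have hstep := stepM (x + y') e hxz
      have heq : x + y = (x + y') + Pi.single e 1 := by
        rw [hdecomp]; funext e'; simp [add_assoc]
      rw [heq]
      have hcast : ((n + 1 : ℕ) : ℝ) / γ * M = (n : ℝ) / γ * M + M / γ := by
        push_cast; ring
      rw [hcast]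
      linarith
  exact key (∑ e, y e) y rfl
end

section
/- Suppose the family {f_e} has concave ratio γ with 0 < γ ≤ 1, and let P be a finite collection of paths with D(P,x) = ∑_{p∈P} r(p,x). Let x be a budget vector, let s* be a unit vector maximizing D(P, x+s) - D(P, x) over all unit vectors s, and suppose there is a budget vector y with ‖y‖ = K ≥ 1 and D(P, x+y) = |P|·T. Then |P|·T - D(P, x+s*) ≤ (1 - γ/K)·(|P|·T - D(P, x)) as real numbers. -/
/-- `D(P,x) = ∑_{p∈P} r(p,x)`. -/
noncomputable def DSum {E : Type*} (f : E → ℕ → ℕ) (T : ℕ) (P : Finset (Finset E))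
    (x : E → ℕ) : ℝ :=
  ∑ p ∈ P, rPath f T p x

section MyAux

variable {E : Type*} [DecidableEq E]

set_option linter.unusedSectionVars false

lemma my_real_key (T Sx Sz dx dz γ : ℝ) (hγ0 : 0 < γ) (hγ1 : γ ≤ 1)
    (hS : Sx ≤ Sz) (hdz : 0 ≤ dz) (hdx : 0 ≤ dx) (hγd : γ * dz ≤ dx) :
    min T (Sz + dz) - min T Sz ≤ (1/γ) * (min T (Sx + dx) - min T Sx) := by
  rcases le_total T Sx with h1 | h1 <;>
  rcases le_total T Sz with h2 | h2 <;>
  rcases le_total T (Sx + dx) with h3 | h3 <;>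
  rcases le_total T (Sz + dz) with h4 | h4 <;>
  simp only [min_eq_left, min_eq_right, h1, h2, h3, h4] <;>
  rw [one_div, ← div_eq_inv_mul, le_div_iff₀ hγ0] <;> nlinarith

lemma my_sum_single_apply (f : E → ℕ → ℕ) (p : Finset E) (g : E → ℕ) (e₀ : E) :
    ∑ e ∈ p, (f e ((g + (Pi.single e₀ 1 : E → ℕ)) e) : ℝ) =
      ∑ e ∈ p, (f e (g e) : ℝ) +
        (if e₀ ∈ p then ((f e₀ (g e₀ + 1) : ℝ) - (f e₀ (g e₀) : ℝ)) else 0) := by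
  have h : ∀ e ∈ p, (f e ((g + (Pi.single e₀ 1 : E → ℕ)) e) : ℝ) =
      (f e (g e) : ℝ) + (if e = e₀ then ((f e₀ (g e₀ + 1) : ℝ) - (f e₀ (g e₀) : ℝ)) else 0) := by
    intro e _
    by_cases h : e = e₀
    · subst h; simp [Pi.single_eq_same]
    · simp [Pi.single_eq_of_ne h, h]
  rw [Finset.sum_congr rfl h, Finset.sum_add_distrib, Finset.sum_ite_eq' p e₀]

lemma my_rPath_mono (f : E → ℕ → ℕ) (hf : ∀ e, Monotone (f e)) (T : ℕ) (p : Finset E)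
    {x z : E → ℕ} (h : ∀ e, x e ≤ z e) : rPath f T p x ≤ rPath f T p z := by
  apply min_le_min le_rfl
  apply Finset.sum_le_sum
  intro e _
  exact_mod_cast hf e (h e)

lemma my_DSum_mono (f : E → ℕ → ℕ) (hf : ∀ e, Monotone (f e)) (T : ℕ) (P : Finset (Finset E))
    {x z : E → ℕ} (h : ∀ e, x e ≤ z e) : DSum f T P x ≤ DSum f T P z :=
  Finset.sum_le_sum fun p _ => my_rPath_mono f hf T p h

lemma my_key_path (f : E → ℕ → ℕ) (hf : ∀ e, Monotone (f e)) (T : ℕ)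
    (γ : ℝ) (hγ0 : 0 < γ) (hγ1 : γ ≤ 1) (hconc : HasConcaveRatio f γ)
    (p : Finset E) (x z : E → ℕ) (hxz : ∀ e, x e ≤ z e) (e₀ : E) :
    rPath f T p (z + (Pi.single e₀ 1 : E → ℕ)) - rPath f T p z ≤
      (1/γ) * (rPath f T p (x + (Pi.single e₀ 1 : E → ℕ)) - rPath f T p x) := by
  unfold rPath
  rw [my_sum_single_apply f p z e₀, my_sum_single_apply f p x e₀]
  by_cases hmem : e₀ ∈ p
  · simp only [hmem, if_true]
    apply my_real_key _ _ _ _ _ _ hγ0 hγ1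
    · apply Finset.sum_le_sum; intro e _; exact_mod_cast hf e (hxz e)
    · have h := hf e₀ (Nat.le_succ (z e₀))
      have : (f e₀ (z e₀) : ℝ) ≤ (f e₀ (z e₀ + 1) : ℝ) := by exact_mod_cast h
      linarith
    · have h := hf e₀ (Nat.le_succ (x e₀))
      have : (f e₀ (x e₀) : ℝ) ≤ (f e₀ (x e₀ + 1) : ℝ) := by exact_mod_cast h
      linarith
    · exact hconc e₀ (x e₀) (z e₀) (hxz e₀)
  · simp only [hmem, if_false, add_zero, sub_self]
    have : (0:ℝ) ≤ min (T:ℝ) (∑ e ∈ p, (f e (x e) : ℝ) + ((f e₀ (x e₀ + 1) : ℝ) - (f e₀ (x e₀) : ℝ)))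
        - min (T:ℝ) (∑ e ∈ p, (f e (x e) : ℝ)) := by
      have hm := hf e₀ (Nat.le_succ (x e₀))
      have : (f e₀ (x e₀) : ℝ) ≤ (f e₀ (x e₀ + 1) : ℝ) := by exact_mod_cast hm
      have := min_le_min (le_refl (T:ℝ))
        (by linarith : ∑ e ∈ p, (f e (x e) : ℝ) ≤ ∑ e ∈ p, (f e (x e) : ℝ) + ((f e₀ (x e₀ + 1) : ℝ) - (f e₀ (x e₀) : ℝ)))
      linarith
    positivity

end MyAux

theorem stmt_5 {E : Type*} [Fintype E] [Nonempty E] [DecidableEq E]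
    (f : E → ℕ → ℕ) (hf : ∀ e, Monotone (f e)) (T : ℕ) (hT : 1 ≤ T)
    (γ : ℝ) (hγ0 : 0 < γ) (hγ1 : γ ≤ 1) (hconc : HasConcaveRatio f γ)
    (P : Finset (Finset E)) (x : E → ℕ)
    (sstar : E → ℕ) (hs : IsUnitVec sstar)
    (hmax : ∀ t : E → ℕ, IsUnitVec t →
      DSum f T P (x + t) - DSum f T P x ≤ DSum f T P (x + sstar) - DSum f T P x)
    (K : ℕ) (hK : 1 ≤ K) (y : E → ℕ) (hycost : ∑ e, y e = K)
    (hyblock : DSum f T P (x + y) = (P.card : ℝ) * T) :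
    (P.card : ℝ) * T - DSum f T P (x + sstar) ≤
      (1 - γ / K) * ((P.card : ℝ) * T - DSum f T P x) := by
  set Δ : ℝ := DSum f T P (x + sstar) - DSum f T P x with hΔ
  have hΔ0 : 0 ≤ Δ := by
    obtain ⟨e₀, rfl⟩ := hs
    have : ∀ e, x e ≤ (x + (Pi.single e₀ 1 : E → ℕ)) e := fun e => Nat.le_add_right _ _
    have := my_DSum_mono f hf T P this
    simp only [hΔ]; linarith
  -- key step inequality for arbitrary z ≥ x and unit step
  have key_step : ∀ (z : E → ℕ), (∀ e, x e ≤ z e) → ∀ e₀ : E,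
      DSum f T P (z + (Pi.single e₀ 1 : E → ℕ)) - DSum f T P z ≤ (1/γ) * Δ := by
    intro z hz e₀
    have h1 : DSum f T P (z + (Pi.single e₀ 1 : E → ℕ)) - DSum f T P z ≤
        (1/γ) * (DSum f T P (x + (Pi.single e₀ 1 : E → ℕ)) - DSum f T P x) := by
      unfold DSum
      rw [← Finset.sum_sub_distrib, ← Finset.sum_sub_distrib, Finset.mul_sum]
      exact Finset.sum_le_sum fun p _ => my_key_path f hf T γ hγ0 hγ1 hconc p x z hz e₀
    have h2 := hmax (Pi.single e₀ 1) ⟨e₀, rfl⟩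
    have hγinv : (0:ℝ) ≤ 1/γ := by positivity
    calc DSum f T P (z + (Pi.single e₀ 1 : E → ℕ)) - DSum f T P z
        ≤ (1/γ) * (DSum f T P (x + (Pi.single e₀ 1 : E → ℕ)) - DSum f T P x) := h1
      _ ≤ (1/γ) * Δ := mul_le_mul_of_nonneg_left h2 hγinv
  -- induction: for any budget vector y' with total n, D(x+y') - D(x) ≤ (n/γ) Δ
  have main : ∀ n : ℕ, ∀ y' : E → ℕ, ∑ e, y' e = n →
      DSum f T P (x + y') - DSum f T P x ≤ (n / γ) * Δ := by
    intro n
    induction n with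
    | zero =>
      intro y' hy'
      have : y' = 0 := by
        funext e
        have := Finset.sum_eq_zero_iff.mp hy' e (Finset.mem_univ e)
        simpa using this
      subst this
      simp
    | succ n ih =>
      intro y' hy'
      have hex : ∃ e₀, y' e₀ ≠ 0 := by
        by_contra hcon
        push_neg at hcon
        have : ∑ e, y' e = 0 := Finset.sum_eq_zero fun e _ => hcon e
        omega
      obtain ⟨e₀, he₀⟩ := hex
      set y'' : E → ℕ := Function.update y' e₀ (y' e₀ - 1) with hy''
      have hdecomp : y' = y'' + (Pi.single e₀ 1 : E → ℕ) := by
        funext e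
        by_cases h : e = e₀
        · subst h; simp [hy'', Pi.single_eq_same]; omega
        · simp [hy'', Function.update_of_ne h, Pi.single_eq_of_ne h]
      have hsum'' : ∑ e, y'' e = n := by
        have h1 : ∑ e, y' e = ∑ e, y'' e + ∑ e, (Pi.single e₀ 1 : E → ℕ) e := by
          rw [← Finset.sum_add_distrib]
          exact Finset.sum_congr rfl fun e _ => by rw [hdecomp]; rfl
        have h2 : ∑ e, (Pi.single e₀ 1 : E → ℕ) e = 1 := by
          rw [Finset.sum_pi_single']
          simp
        omega
      have hxy'' : ∀ e, x e ≤ (x + y'') e := fun e => Nat.le_add_right _ _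
      have hstep := key_step (x + y'') hxy'' e₀
      have hih := ih y'' hsum''
      have heq : x + y' = (x + y'') + (Pi.single e₀ 1 : E → ℕ) := by
        rw [hdecomp]; funext e; simp [add_assoc]
      rw [heq]
      push_cast
      have : ((n:ℝ) + 1) / γ * Δ = (1/γ) * Δ + (n/γ) * Δ := by ring
      rw [this]
      linarith
  have hmain := main K y hycost
  rw [hyblock] at hmain
  -- hmain : |P|T - D(x) ≤ (K/γ) Δ
  have hKpos : (0:ℝ) < K := by exact_mod_cast hK
  have h1 : (γ / K) * ((P.card : ℝ) * T - DSum f T P x) ≤ (γ / K) * ((K / γ) * Δ) :=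
    mul_le_mul_of_nonneg_left hmain (by positivity)
  have h2 : (γ / K) * ((K / γ) * Δ) = Δ := by
    field_simp
  rw [h2] at h1
  nlinarith [h1]
end

section
/- (Approximation guarantee of the Iterative Greedy algorithm.) Suppose the family {f_e} has concave ratio γ with 0 < γ ≤ 1, let P be a nonempty finite collection of paths with D(P,x) = ∑_{p∈P} r(p,x), and suppose some budget vector x* with ‖x*‖ = K ≥ 1 blocks every path in P. Define the greedy sequence x_0 = 0 and x_{i+1} = x_i + s_i, where s_i is a unit vector maximizing D(P, x_i+s) - D(P, x_i) over all unit vectors s. Then for every index i with D(P, x_i) < |P|·T, one has i ≤ K·ln(|P|·T) / (γ·(1 - γ/(2K))); in particular the greedy algorithm blocks all paths in P using a budget within factor O(γ^{-1}·ln(|P|·T)) of K. -/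
/-!
STATEMENT 6 (Approximation guarantee of the Iterative Greedy algorithm):
if `D(P, x_i) < |P|·T`, then `i ≤ K·ln(|P|·T) / (γ·(1 - γ/(2K)))`.  Since `‖x_i‖ = i`,
the greedy algorithm blocks all paths in `P` with budget `O(γ⁻¹·ln(|P|·T))·K`.
-/

section Aux
set_option linter.unusedSectionVars false

variable {E : Type*} [Fintype E] [DecidableEq E]

lemma rPath_mono (f : E → ℕ → ℕ) (T : ℕ) (hf : ∀ e, Monotone (f e)) (p : Finset E)
    {x y : E → ℕ} (h : ∀ e, x e ≤ y e) : rPath f T p x ≤ rPath f T p y := by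
  unfold rPath
  refine min_le_min le_rfl (Finset.sum_le_sum fun e _ => ?_)
  exact_mod_cast hf e (h e)

lemma DSum_mono (f : E → ℕ → ℕ) (T : ℕ) (hf : ∀ e, Monotone (f e)) (P : Finset (Finset E))
    {x y : E → ℕ} (h : ∀ e, x e ≤ y e) : DSum f T P x ≤ DSum f T P y :=
  Finset.sum_le_sum fun p _ => rPath_mono f T hf p h

lemma DSum_le (f : E → ℕ → ℕ) (T : ℕ) (P : Finset (Finset E)) (x : E → ℕ) :
    DSum f T P x ≤ (P.card : ℝ) * T := by
  calc DSum f T P x ≤ ∑ _p ∈ P, (T : ℝ) := Finset.sum_le_sum fun p _ => min_le_left _ _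
  _ = (P.card : ℝ) * T := by rw [Finset.sum_const, nsmul_eq_mul]

lemma DSum_nonneg (f : E → ℕ → ℕ) (T : ℕ) (P : Finset (Finset E)) (x : E → ℕ) :
    0 ≤ DSum f T P x := by
  refine Finset.sum_nonneg fun p _ => le_min (by positivity) (Finset.sum_nonneg fun e _ => by positivity)

lemma min_gain {γ T A B da db : ℝ} (hγ0 : 0 < γ) (hγ1 : γ ≤ 1)
    (hAB : A ≤ B) (hda : 0 ≤ da) (hdb : 0 ≤ db) (hcon : γ * db ≤ da) :
    γ * (min T (B + db) - min T B) ≤ min T (A + da) - min T A := by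
  rcases le_total T B with h | h
  · rw [min_eq_left h, min_eq_left (h.trans (le_add_of_nonneg_right hdb))]
    have h2 : min T A ≤ min T (A + da) := min_le_min le_rfl (le_add_of_nonneg_right hda)
    nlinarith
  · rw [min_eq_right h]
    have hA : A ≤ T := hAB.trans h
    rw [min_eq_right hA]
    rcases le_total (A + da) T with h2 | h2
    · rw [min_eq_right h2]
      have h3 : min T (B + db) ≤ B + db := min_le_right _ _
      nlinarith
    · rw [min_eq_left h2]
      have h3 : min T (B + db) ≤ T := min_le_left _ _
      have h4 : B ≤ min T (B + db) := le_min h (by linarith)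
      nlinarith

lemma rPath_gain (f : E → ℕ → ℕ) (T : ℕ) (hf : ∀ e, Monotone (f e))
    {γ : ℝ} (hγ0 : 0 < γ) (hγ1 : γ ≤ 1) (hconc : HasConcaveRatio f γ)
    (p : Finset E) (e₀ : E) {x y : E → ℕ} (hxy : ∀ e, x e ≤ y e) :
    γ * (rPath f T p (y + Pi.single e₀ 1) - rPath f T p y) ≤
      rPath f T p (x + Pi.single e₀ 1) - rPath f T p x := by
  by_cases he : e₀ ∈ p
  · have keyx : ∀ z : E → ℕ, ∑ e ∈ p, ((f e ((z + Pi.single e₀ 1 : E → ℕ) e) : ℝ))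
        = (f e₀ (z e₀ + 1) : ℝ) + ∑ e ∈ p.erase e₀, (f e (z e) : ℝ) := by
      intro z
      rw [← Finset.add_sum_erase p _ he]
      congr 1
      · simp
      · refine Finset.sum_congr rfl fun e heq => ?_
        have hne : e ≠ e₀ := Finset.ne_of_mem_erase heq
        simp [Pi.single_eq_of_ne hne]
    have keyz : ∀ z : E → ℕ, ∑ e ∈ p, ((f e (z e) : ℝ))
        = (f e₀ (z e₀) : ℝ) + ∑ e ∈ p.erase e₀, (f e (z e) : ℝ) :=
      fun z => (Finset.add_sum_erase p _ he).symm
    unfold rPath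
    rw [keyx x, keyx y, keyz x, keyz y]
    set Sx := ∑ e ∈ p.erase e₀, ((f e (x e)) : ℝ) with hSx
    set Sy := ∑ e ∈ p.erase e₀, ((f e (y e)) : ℝ) with hSy
    have hS : Sx ≤ Sy := Finset.sum_le_sum fun e _ => by exact_mod_cast hf e (hxy e)
    have ha : (f e₀ (x e₀) : ℝ) ≤ (f e₀ (y e₀) : ℝ) := by exact_mod_cast hf e₀ (hxy e₀)
    have hda : (0:ℝ) ≤ (f e₀ (x e₀ + 1) : ℝ) - f e₀ (x e₀) := by
      have := hf e₀ (Nat.le_succ (x e₀)); simp only [sub_nonneg]; exact_mod_cast this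
    have hdb : (0:ℝ) ≤ (f e₀ (y e₀ + 1) : ℝ) - f e₀ (y e₀) := by
      have := hf e₀ (Nat.le_succ (y e₀)); simp only [sub_nonneg]; exact_mod_cast this
    have hcon := hconc e₀ (x e₀) (y e₀) (hxy e₀)
    have := min_gain (T := (T:ℝ)) (A := (f e₀ (x e₀) : ℝ) + Sx) (B := (f e₀ (y e₀) : ℝ) + Sy)
      (da := (f e₀ (x e₀ + 1) : ℝ) - f e₀ (x e₀)) (db := (f e₀ (y e₀ + 1) : ℝ) - f e₀ (y e₀))
      hγ0 hγ1 (by linarith) hda hdb hcon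
    have e1 : (f e₀ (x e₀) : ℝ) + Sx + ((f e₀ (x e₀ + 1) : ℝ) - f e₀ (x e₀))
        = (f e₀ (x e₀ + 1) : ℝ) + Sx := by ring
    have e2 : (f e₀ (y e₀) : ℝ) + Sy + ((f e₀ (y e₀ + 1) : ℝ) - f e₀ (y e₀))
        = (f e₀ (y e₀ + 1) : ℝ) + Sy := by ring
    rw [e1, e2] at this
    exact this
  · have keyx : ∀ z : E → ℕ, rPath f T p (z + Pi.single e₀ 1) = rPath f T p z := by
      intro z
      unfold rPath
      congr 1
      refine Finset.sum_congr rfl fun e heq => ?_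
      have hne : e ≠ e₀ := fun h => he (h ▸ heq)
      simp [Pi.single_eq_of_ne hne]
    rw [keyx x, keyx y]
    simp

lemma DSum_gain (f : E → ℕ → ℕ) (T : ℕ) (hf : ∀ e, Monotone (f e))
    {γ : ℝ} (hγ0 : 0 < γ) (hγ1 : γ ≤ 1) (hconc : HasConcaveRatio f γ)
    (P : Finset (Finset E)) (e₀ : E) {x y : E → ℕ} (hxy : ∀ e, x e ≤ y e) :
    γ * (DSum f T P (y + Pi.single e₀ 1) - DSum f T P y) ≤
      DSum f T P (x + Pi.single e₀ 1) - DSum f T P x := by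
  unfold DSum
  rw [← Finset.sum_sub_distrib, ← Finset.sum_sub_distrib, Finset.mul_sum]
  exact Finset.sum_le_sum fun p _ => rPath_gain f T hf hγ0 hγ1 hconc p e₀ hxy

lemma DSum_key (f : E → ℕ → ℕ) (T : ℕ) (hf : ∀ e, Monotone (f e))
    {γ : ℝ} (hγ0 : 0 < γ) (hγ1 : γ ≤ 1) (hconc : HasConcaveRatio f γ)
    (P : Finset (Finset E)) {x : E → ℕ} {G : ℝ}
    (hG : ∀ e₀ : E, DSum f T P (x + Pi.single e₀ 1) - DSum f T P x ≤ G) :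
    ∀ n : ℕ, ∀ z : E → ℕ, (∑ e, z e) = n →
      γ * (DSum f T P (x + z) - DSum f T P x) ≤ (n : ℝ) * G := by
  intro n
  induction n with
  | zero =>
    intro z hz
    have hz0 : z = 0 := by
      funext e
      exact (Finset.sum_eq_zero_iff.mp hz) e (Finset.mem_univ e)
    simp [hz0]
  | succ n ih =>
    intro z hz
    have hex : ∃ e₀ : E, z e₀ ≠ 0 := by
      by_contra h
      push_neg at h
      simp [h] at hz
    obtain ⟨e₀, he₀⟩ := hex
    set z' : E → ℕ := fun e => if e = e₀ then z e - 1 else z e with hz'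
    have hzz : z = z' + Pi.single e₀ 1 := by
      funext e
      by_cases h : e = e₀
      · subst h; simp [hz']; omega
      · simp [hz', h, Pi.single_eq_of_ne h]
    have hsum' : ∑ e, z' e = n := by
      have : ∑ e, z e = (∑ e, z' e) + ∑ e, (Pi.single e₀ 1 : E → ℕ) e := by
        rw [hzz]; exact Finset.sum_add_distrib
      rw [Finset.sum_pi_single'] at this
      simp at this
      omega
    have step1 : γ * (DSum f T P ((x + z') + Pi.single e₀ 1) - DSum f T P (x + z')) ≤ G := by
      have h1 := DSum_gain f T hf hγ0 hγ1 hconc P e₀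
        (x := x) (y := x + z') (fun e => by simp)
      exact h1.trans (hG e₀)
    have step2 := ih z' hsum'
    have hassoc : x + z = (x + z') + Pi.single e₀ 1 := by rw [hzz, add_assoc]
    rw [hassoc]
    push_cast
    nlinarith [step1, step2]

lemma DSum_natCast (f : E → ℕ → ℕ) (T : ℕ) (P : Finset (Finset E)) (x : E → ℕ) :
    DSum f T P x = ((∑ p ∈ P, min T (∑ e ∈ p, f e (x e)) : ℕ) : ℝ) := by
  unfold DSum rPath
  push_cast
  rfl

end Aux

theorem stmt_6 {E : Type*} [Fintype E] [Nonempty E] [DecidableEq E]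
    (f : E → ℕ → ℕ) (hf : ∀ e, Monotone (f e)) (T : ℕ) (hT : 1 ≤ T)
    (γ : ℝ) (hγ0 : 0 < γ) (hγ1 : γ ≤ 1) (hconc : HasConcaveRatio f γ)
    (P : Finset (Finset E)) (hP : P.Nonempty)
    (K : ℕ) (hK : 1 ≤ K) (xstar : E → ℕ) (hxstarcost : ∑ e, xstar e = K)
    (hxstarblock : ∀ p ∈ P, T ≤ ∑ e ∈ p, f e (xstar e))
    (xs : ℕ → E → ℕ) (h0 : xs 0 = 0)
    (hstep : ∀ i : ℕ, ∃ s : E → ℕ, IsUnitVec s ∧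
      (∀ t : E → ℕ, IsUnitVec t → DSum f T P (xs i + t) ≤ DSum f T P (xs i + s)) ∧
      xs (i + 1) = xs i + s) :
    ∀ i : ℕ, DSum f T P (xs i) < (P.card : ℝ) * T →
      (i : ℝ) ≤ K * Real.log ((P.card : ℝ) * T) / (γ * (1 - γ / (2 * K))) := by
  set M : ℝ := (P.card : ℝ) * T with hMdef
  have hcard : (1:ℝ) ≤ (P.card:ℝ) := by exact_mod_cast Finset.card_pos.mpr hP
  have hTr : (1:ℝ) ≤ (T:ℝ) := by exact_mod_cast hT
  have hM1 : (1:ℝ) ≤ M := by nlinarith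
  have hKr : (1:ℝ) ≤ (K:ℝ) := by exact_mod_cast hK
  have hKpos : (0:ℝ) < (K:ℝ) := by linarith
  -- the one-step decay inequality
  have hstepineq : ∀ i, M - DSum f T P (xs (i+1)) ≤
      (1 - γ/(K:ℝ)) * (M - DSum f T P (xs i)) := by
    intro i
    obtain ⟨s, hsu, hsmax, hsucc⟩ := hstep i
    set D := DSum f T P (xs i) with hD
    set G := DSum f T P (xs i + s) - D with hG
    have hGbound : ∀ e₀ : E, DSum f T P (xs i + Pi.single e₀ 1) - D ≤ G := by
      intro e₀
      have := hsmax (Pi.single e₀ 1) ⟨e₀, rfl⟩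
      simp only [hG]
      linarith
    have hkey := DSum_key f T hf hγ0 hγ1 hconc P hGbound K xstar hxstarcost
    have hDfull : DSum f T P (xs i + xstar) = M := by
      refine le_antisymm (DSum_le f T P _) ?_
      have h1 : DSum f T P xstar ≤ DSum f T P (xs i + xstar) :=
        DSum_mono f T hf P (fun e => by simp)
      have h2 : DSum f T P xstar = M := by
        unfold DSum rPath
        rw [hMdef]
        have hmin : ∀ p ∈ P, min (T:ℝ) (∑ e ∈ p, ((f e (xstar e)):ℝ)) = (T:ℝ) := by
          intro p hp
          refine min_eq_left ?_
          have := hxstarblock p hp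
          calc (T:ℝ) ≤ ((∑ e ∈ p, f e (xstar e) : ℕ) : ℝ) := by exact_mod_cast this
          _ = ∑ e ∈ p, ((f e (xstar e)):ℝ) := by push_cast; rfl
        rw [Finset.sum_congr rfl hmin, Finset.sum_const, nsmul_eq_mul]
      linarith
    rw [hDfull] at hkey
    have h5 : γ / (K:ℝ) * (M - D) ≤ G := by
      rw [div_mul_eq_mul_div, div_le_iff₀ hKpos]
      nlinarith
    have h6 : DSum f T P (xs (i+1)) = D + G := by rw [hsucc, hG]; ring
    have h7 : (1 - γ/(K:ℝ)) * (M - D) = (M - D) - γ/(K:ℝ) * (M - D) := by ring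
    rw [h6, h7]
    linarith
  have h1t0 : (0:ℝ) ≤ 1 - γ/(K:ℝ) := by
    have : γ/(K:ℝ) ≤ 1 := by rw [div_le_one hKpos]; linarith
    linarith
  have hdecay : ∀ i, M - DSum f T P (xs i) ≤ (1 - γ/(K:ℝ))^i * M := by
    intro i
    induction i with
    | zero =>
      simp only [pow_zero, one_mul]
      have := DSum_nonneg f T P (xs 0)
      linarith
    | succ n ih =>
      calc M - DSum f T P (xs (n+1)) ≤ (1 - γ/(K:ℝ)) * (M - DSum f T P (xs n)) :=
            hstepineq n
      _ ≤ (1 - γ/(K:ℝ)) * ((1 - γ/(K:ℝ))^n * M) := mul_le_mul_of_nonneg_left ih h1t0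
      _ = (1 - γ/(K:ℝ))^(n+1) * M := by ring
  intro i hi
  -- integrality: the deficit is at least 1
  have hΦ : (1:ℝ) ≤ M - DSum f T P (xs i) := by
    have heq := DSum_natCast f T P (xs i)
    set N : ℕ := ∑ p ∈ P, min T (∑ e ∈ p, f e (xs i e)) with hN
    have hlt : ((N:ℕ):ℝ) < ((P.card * T : ℕ):ℝ) := by
      push_cast
      rw [← heq]
      exact hi
    have hltn : N < P.card * T := by exact_mod_cast hlt
    have : (N:ℝ) + 1 ≤ ((P.card * T : ℕ):ℝ) := by exact_mod_cast hltn
    push_cast at this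
    rw [heq]
    linarith [this]
  have hmain : (1:ℝ) ≤ (1 - γ/(K:ℝ))^i * M := hΦ.trans (hdecay i)
  have hlogM : 0 ≤ Real.log M := Real.log_nonneg hM1
  have hd0 : (0:ℝ) < γ * (1 - γ / (2 * (K:ℝ))) := by
    have h1 : γ / (2 * (K:ℝ)) < 1 := by
      rw [div_lt_one (by linarith)]
      linarith
    exact mul_pos hγ0 (by linarith)
  rcases Nat.eq_zero_or_pos i with rfl | hi1
  · simp only [Nat.cast_zero]
    exact div_nonneg (by positivity) hd0.le
  · have ht1 : γ / (K:ℝ) ≤ 1 := by rw [div_le_one hKpos]; linarith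
    rcases eq_or_lt_of_le ht1 with heq | hlt
    · exfalso
      have hz : (1 - γ/(K:ℝ)) = 0 := by rw [heq]; ring
      rw [hz, zero_pow (Nat.pos_iff_ne_zero.mp hi1), zero_mul] at hmain
      linarith
    · have h1t : (0:ℝ) < 1 - γ/(K:ℝ) := by linarith
      have hlogineq : 0 ≤ (i:ℝ) * Real.log (1 - γ/(K:ℝ)) + Real.log M := by
        have h8 : 0 ≤ Real.log ((1 - γ/(K:ℝ))^i * M) := Real.log_nonneg hmain
        rw [Real.log_mul (pow_ne_zero _ (ne_of_gt h1t)) (by linarith),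
          Real.log_pow] at h8
        exact_mod_cast h8
      have hlogle : Real.log (1 - γ/(K:ℝ)) ≤ -(γ/(K:ℝ)) := by
        have := Real.log_le_sub_one_of_pos h1t
        linarith
      have hi0 : (0:ℝ) ≤ (i:ℝ) := Nat.cast_nonneg i
      have h6 : (i:ℝ) * Real.log (1 - γ/(K:ℝ)) ≤ (i:ℝ) * (-(γ/(K:ℝ))) :=
        mul_le_mul_of_nonneg_left hlogle hi0
      have h8 : (i:ℝ) * (γ/(K:ℝ)) ≤ Real.log M := by linarith
      have h9 : (i:ℝ) * γ ≤ (K:ℝ) * Real.log M := by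
        have h10 := mul_le_mul_of_nonneg_left h8 hKpos.le
        have h11 : (K:ℝ) * ((i:ℝ) * (γ/(K:ℝ))) = (i:ℝ) * γ := by
          field_simp
        linarith
      rw [le_div_iff₀ hd0]
      have hdγ : γ * (1 - γ / (2 * (K:ℝ))) ≤ γ := by
        have : 0 ≤ γ / (2 * (K:ℝ)) := by positivity
        nlinarith
      nlinarith [mul_le_mul_of_nonneg_left hdγ hi0]
end

section
/- Enumerate E as e_1, …, e_m. Let x and z be budget vectors, and for 1 ≤ i ≤ m+1 define the budget vector v_i by v_i(e_j) = x(e_j) + z(e_j) if j ≥ i and v_i(e_j) = x(e_j) if j < i (so v_1 = x + z and v_{m+1} = x). Let 1_{e} denote the unit vector at edge e. Then for every finite collection P of paths and every i with 1 ≤ i ≤ m: D(P, v_i) - D(P, v_{i+1}) ≤ D(P, x + z(e_i)·1_{e_i}) - D(P, x). -/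
/-!
STATEMENT 7: enumerate `E` as `e_0, …, e_{m-1}` (via an equivalence `σ : Fin m ≃ E`),
and define the hybrid vectors `v_i(e_j) = x(e_j) + z(e_j)` if `j ≥ i` and `x(e_j)`
otherwise, so `v_0 = x + z` and `v_m = x`.  Then for every `i < m`,
`D(P, v_i) - D(P, v_{i+1}) ≤ D(P, x + z(e_i)·1_{e_i}) - D(P, x)`.
-/

private lemma min_concave_aux (T c d s t : ℝ) (hcd : c ≤ d) (hst : s ≤ t) :
    min T (d + t) - min T (c + t) ≤ min T (d + s) - min T (c + s) := by
  simp only [min_def]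
  split_ifs <;> linarith

theorem stmt_7 {E : Type*} [Fintype E] [Nonempty E] [DecidableEq E]
    (f : E → ℕ → ℕ) (hf : ∀ e, Monotone (f e)) (T : ℕ) (hT : 1 ≤ T)
    (m : ℕ) (hm : m = Fintype.card E) (σ : Fin m ≃ E)
    (x z : E → ℕ) (P : Finset (Finset E))
    (v : ℕ → E → ℕ)
    (hv : ∀ i : ℕ, ∀ e : E, v i e = if i ≤ ((σ.symm e : Fin m) : ℕ) then x e + z e else x e)
    (i : Fin m) :
    DSum f T P (v i) - DSum f T P (v ((i : ℕ) + 1)) ≤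
      DSum f T P (x + Pi.single (σ i) (z (σ i))) - DSum f T P x := by
  set e0 := σ i with he0
  -- key pointwise facts
  have hsymm : σ.symm e0 = i := by simp [he0]
  have hvie0 : v i e0 = x e0 + z e0 := by
    rw [hv]; simp [hsymm]
  have hvi1e0 : v ((i : ℕ) + 1) e0 = x e0 := by
    rw [hv]; simp [hsymm]
  have hne : ∀ e : E, e ≠ e0 → v (i : ℕ) e = v ((i : ℕ) + 1) e := by
    intro e he
    have hje : (σ.symm e : ℕ) ≠ (i : ℕ) := by
      intro h
      apply he
      have : σ.symm e = i := Fin.ext h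
      rw [he0, ← this]; simp
    rw [hv, hv]
    by_cases h : ((i : ℕ) + 1) ≤ (σ.symm e : ℕ)
    · rw [if_pos h, if_pos (le_of_lt h)]
    · rw [if_neg h, if_neg (by omega)]
  have hx_le : ∀ e : E, x e ≤ v ((i : ℕ) + 1) e := by
    intro e
    rw [hv]
    split_ifs <;> omega
  have hsingle : ∀ e : E, e ≠ e0 → ((x + Pi.single e0 (z e0) : E → ℕ) e) = x e := by
    intro e he
    simp [Pi.single_eq_of_ne he]
  have hsingle0 : ((x + Pi.single e0 (z e0) : E → ℕ) e0) = x e0 + z e0 := by simp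
  unfold DSum
  rw [← Finset.sum_sub_distrib, ← Finset.sum_sub_distrib]
  apply Finset.sum_le_sum
  intro p _
  unfold rPath
  by_cases hp : e0 ∈ p
  · rw [← Finset.add_sum_erase p _ hp, ← Finset.add_sum_erase p _ hp,
        ← Finset.add_sum_erase p _ hp, ← Finset.add_sum_erase p _ hp]
    have h1 : ∑ e ∈ p.erase e0, (f e (v (i : ℕ) e) : ℝ)
        = ∑ e ∈ p.erase e0, (f e (v ((i : ℕ) + 1) e) : ℝ) := by
      apply Finset.sum_congr rfl
      intro e he
      rw [hne e (Finset.ne_of_mem_erase he)]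
    have h2 : ∑ e ∈ p.erase e0, (f e (((x + Pi.single e0 (z e0) : E → ℕ) e)) : ℝ)
        = ∑ e ∈ p.erase e0, (f e (x e) : ℝ) := by
      apply Finset.sum_congr rfl
      intro e he
      rw [hsingle e (Finset.ne_of_mem_erase he)]
    rw [h1, h2, hvie0, hvi1e0, hsingle0]
    apply min_concave_aux
    · exact_mod_cast hf e0 (Nat.le_add_right _ _)
    · apply Finset.sum_le_sum
      intro e _
      exact_mod_cast hf e (hx_le e)
  · have h1 : ∑ e ∈ p, (f e (v (i : ℕ) e) : ℝ) = ∑ e ∈ p, (f e (v ((i : ℕ) + 1) e) : ℝ) :=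
      Finset.sum_congr rfl fun e he => by rw [hne e (fun h => hp (h ▸ he))]
    have h2 : ∑ e ∈ p, (f e (((x + Pi.single e0 (z e0) : E → ℕ) e)) : ℝ) = ∑ e ∈ p, (f e (x e) : ℝ) :=
      Finset.sum_congr rfl fun e he => by rw [hsingle e (fun h => hp (h ▸ he))]
    rw [h1, h2]
    simp
end

section
/- Let P be a finite collection of paths with D(P,x) = ∑_{p∈P} r(p,x), let B ≥ 1 be a natural number, and let x be a budget vector. Let (e*, j*) with e* ∈ E and 1 ≤ j* ≤ B maximize the ratio (D(P, x + j·1_e) - D(P, x))/j over all e ∈ E and all integers 1 ≤ j ≤ B, where 1_e denotes the unit vector at e. Suppose there is a budget vector y with ‖y‖ = K ≥ 1, y(e) ≤ B for all e ∈ E, and D(P, x+y) = |P|·T. Then |P|·T - D(P, x + j*·1_{e*}) ≤ (1 - j*/K)·(|P|·T - D(P, x)) as real numbers. -/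
private lemma min_superadd (a s u v : ℝ) (hu : 0 ≤ u) (hv : 0 ≤ v) :
    min a (s + (u + v)) + min a s ≤ min a (s + u) + min a (s + v) := by
  simp only [min_def]
  split_ifs <;> linarith

private lemma lemB {ι : Type*} [DecidableEq ι] (a s : ℝ) (d : ι → ℝ) :
    ∀ I : Finset ι, (∀ i ∈ I, 0 ≤ d i) →
      min a (s + ∑ i ∈ I, d i) - min a s ≤ ∑ i ∈ I, (min a (s + d i) - min a s) := by
  intro I
  induction I using Finset.induction_on with
  | empty => intro _; simp
  | @insert j I hj ih =>
    intro hd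
    rw [Finset.sum_insert hj, Finset.sum_insert hj]
    have h1 := min_superadd a s (d j) (∑ i ∈ I, d i) (hd j (by simp))
      (Finset.sum_nonneg fun i hi => hd i (by simp [hi]))
    have h2 := ih (fun i hi => hd i (by simp [hi]))
    linarith

private lemma path_step {E : Type*} [Fintype E] [DecidableEq E]
    (f : E → ℕ → ℕ) (hf : ∀ e, Monotone (f e)) (T : ℕ) (p : Finset E) (x y : E → ℕ) :
    rPath f T p (x + y) - rPath f T p x ≤
      ∑ e : E, (rPath f T p (x + Pi.single e (y e)) - rPath f T p x) := by
  set s : ℝ := ∑ e ∈ p, (f e (x e) : ℝ) with hs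
  set d : E → ℝ := fun e => if e ∈ p then (f e (x e + y e) : ℝ) - f e (x e) else 0 with hdd
  have hd : ∀ e, 0 ≤ d e := by
    intro e
    simp only [hdd]
    split_ifs with h
    · have : (f e (x e) : ℝ) ≤ f e (x e + y e) :=
        Nat.cast_le.mpr (hf e (Nat.le_add_right _ _))
      linarith
    · exact le_refl 0
  have hx : rPath f T p x = min (T : ℝ) s := rfl
  have h1 : rPath f T p (x + y) = min (T : ℝ) (s + ∑ e : E, d e) := by
    have hsum : ∑ e : E, d e = ∑ e ∈ p, ((f e (x e + y e) : ℝ) - f e (x e)) := by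
      rw [hdd]
      rw [Finset.sum_ite_mem]
      congr 1
      exact Finset.univ_inter p
    rw [rPath, hsum, hs, ← Finset.sum_add_distrib]
    congr 1
    apply Finset.sum_congr rfl
    intro e _
    simp [Pi.add_apply]
  have h2 : ∀ e : E, rPath f T p (x + Pi.single e (y e)) = min (T : ℝ) (s + d e) := by
    intro e
    set z : E → ℕ := x + Pi.single e (y e) with hz
    have hzap : ∀ e', z e' = x e' + (Pi.single e (y e) : E → ℕ) e' := fun e' => rfl
    rw [rPath]
    congr 1
    have hsub : ∑ e' ∈ p, (f e' (z e') : ℝ) - s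
        = ∑ e' ∈ p, ((f e' (z e') : ℝ) - f e' (x e')) := by
      rw [hs, Finset.sum_sub_distrib]
    by_cases hep : e ∈ p
    · have : ∑ e' ∈ p, ((f e' (z e') : ℝ) - f e' (x e')) = d e := by
        rw [Finset.sum_eq_single_of_mem e hep]
        · simp [hdd, hep, hzap, Pi.single_eq_same]
        · intro b _ hbe
          simp [hzap, Pi.single_eq_of_ne hbe]
      linarith [hsub, this]
    · have : ∑ e' ∈ p, ((f e' (z e') : ℝ) - f e' (x e')) = 0 := by
        apply Finset.sum_eq_zero
        intro b hb
        have hbe : b ≠ e := fun h => hep (h ▸ hb)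
        simp [hzap, Pi.single_eq_of_ne hbe]
      have hde : d e = 0 := by simp [hdd, hep]
      linarith [hsub, this]
  rw [hx, h1]
  calc min (T : ℝ) (s + ∑ e : E, d e) - min (T : ℝ) s
      ≤ ∑ e : E, (min (T : ℝ) (s + d e) - min (T : ℝ) s) :=
        lemB (T : ℝ) s d Finset.univ (fun i _ => hd i)
    _ = ∑ e : E, (rPath f T p (x + Pi.single e (y e)) - rPath f T p x) := by
        apply Finset.sum_congr rfl
        intro e _
        rw [h2 e, hx]

set_option maxHeartbeats 1000000 in
theorem stmt_8 {E : Type*} [Fintype E] [Nonempty E] [DecidableEq E]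
    (f : E → ℕ → ℕ) (hf : ∀ e, Monotone (f e)) (T : ℕ) (hT : 1 ≤ T)
    (P : Finset (Finset E)) (B : ℕ) (hB : 1 ≤ B) (x : E → ℕ)
    (estar : E) (jstar : ℕ) (hj1 : 1 ≤ jstar) (hjB : jstar ≤ B)
    (hmax : ∀ e : E, ∀ j : ℕ, 1 ≤ j → j ≤ B →
      (DSum f T P (x + Pi.single e j) - DSum f T P x) / (j : ℝ) ≤
        (DSum f T P (x + Pi.single estar jstar) - DSum f T P x) / (jstar : ℝ))
    (K : ℕ) (hK : 1 ≤ K) (y : E → ℕ) (hycost : ∑ e, y e = K) (hybox : ∀ e, y e ≤ B)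
    (hyblock : DSum f T P (x + y) = (P.card : ℝ) * T) :
    (P.card : ℝ) * T - DSum f T P (x + Pi.single estar jstar) ≤
      (1 - (jstar : ℝ) / K) * ((P.card : ℝ) * T - DSum f T P x) := by
  have hK0 : (0 : ℝ) < K := by exact_mod_cast hK
  have hj0 : (0 : ℝ) < jstar := by exact_mod_cast hj1
  have step1 : DSum f T P (x + y) - DSum f T P x ≤
      ∑ e : E, (DSum f T P (x + Pi.single e (y e)) - DSum f T P x) := by
    have h0 : DSum f T P (x + y) - DSum f T P x
        = ∑ p ∈ P, (rPath f T p (x + y) - rPath f T p x) := by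
      rw [DSum, DSum, Finset.sum_sub_distrib]
    have h1 : ∑ p ∈ P, (rPath f T p (x + y) - rPath f T p x) ≤
        ∑ p ∈ P, ∑ e : E, (rPath f T p (x + Pi.single e (y e)) - rPath f T p x) :=
      Finset.sum_le_sum fun p _ => path_step f hf T p x y
    have h2 : ∑ p ∈ P, ∑ e : E, (rPath f T p (x + Pi.single e (y e)) - rPath f T p x)
        = ∑ e : E, ∑ p ∈ P, (rPath f T p (x + Pi.single e (y e)) - rPath f T p x) :=
      Finset.sum_comm
    have h3 : ∑ e : E, ∑ p ∈ P, (rPath f T p (x + Pi.single e (y e)) - rPath f T p x)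
        = ∑ e : E, (DSum f T P (x + Pi.single e (y e)) - DSum f T P x) := by
      refine Finset.sum_congr rfl fun e _ => ?_
      rw [DSum, DSum, Finset.sum_sub_distrib]
    rw [h0, ← h3, ← h2]
    exact h1
  have step2 : ∀ e : E, DSum f T P (x + Pi.single e (y e)) - DSum f T P x ≤
      (y e : ℝ) * ((DSum f T P (x + Pi.single estar jstar) - DSum f T P x) / (jstar : ℝ)) := by
    intro e
    by_cases h : y e = 0
    · simp [h, Pi.single_zero]
    · have hy1 : 1 ≤ y e := Nat.one_le_iff_ne_zero.mpr h
      have hy0 : (0 : ℝ) < y e := by exact_mod_cast hy1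
      have hmx := hmax e (y e) hy1 (hybox e)
      have := (div_le_iff₀ hy0).mp hmx
      linarith [this]
  have step3 : ∑ e : E, (y e : ℝ) *
        ((DSum f T P (x + Pi.single estar jstar) - DSum f T P x) / (jstar : ℝ))
      = (K : ℝ) * ((DSum f T P (x + Pi.single estar jstar) - DSum f T P x) / (jstar : ℝ)) := by
    rw [← Finset.sum_mul]
    congr 1
    exact_mod_cast congrArg (Nat.cast : ℕ → ℝ) hycost
  have hgap : (P.card : ℝ) * T - DSum f T P x ≤
      (K : ℝ) * ((DSum f T P (x + Pi.single estar jstar) - DSum f T P x) / (jstar : ℝ)) := by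
    rw [← hyblock, ← step3]
    exact step1.trans (Finset.sum_le_sum fun e _ => step2 e)
  have key : (jstar : ℝ) * ((P.card : ℝ) * T - DSum f T P x) ≤
      (K : ℝ) * (DSum f T P (x + Pi.single estar jstar) - DSum f T P x) := by
    rw [mul_div_assoc'] at hgap
    have := (le_div_iff₀ hj0).mp hgap
    linarith [this]
  have hgoal : (1 - (jstar : ℝ) / K) * ((P.card : ℝ) * T - DSum f T P x)
      = (((K : ℝ) - jstar) * ((P.card : ℝ) * T - DSum f T P x)) / K := by
    field_simp
  rw [hgoal, le_div_iff₀ hK0]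
  linarith [key]
end

section
/- (Approximation guarantee of the Adaptive Trading algorithm.) Let P be a nonempty finite collection of paths with D(P,x) = ∑_{p∈P} r(p,x), let B ≥ 1 be a natural number, and suppose some budget vector x* with ‖x*‖ = K ≥ 1 and x*(e) ≤ B for all e ∈ E blocks every path in P. Define the sequence x_0 = 0 and x_{i+1} = x_i + j_i·1_{e_i}, where (e_i, j_i) with e_i ∈ E and 1 ≤ j_i ≤ B maximizes the ratio (D(P, x_i + j·1_e) - D(P, x_i))/j over all e ∈ E and integers 1 ≤ j ≤ B. Then for every index i with D(P, x_i) < |P|·T, one has ‖x_i‖ ≤ K·ln(|P|·T); in particular the algorithm blocks all paths in P using a budget within factor O(ln(|P|·T)) of K. -/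
lemma stmt9_min_concave (T S A d : ℝ) (hSA : S ≤ A) (hd : 0 ≤ d) :
    min T (A + d) + min T S ≤ min T (S + d) + min T A := by
  simp only [min_def]; split_ifs <;> linarith

lemma stmt9_min_subadd (T S : ℝ) {ι : Type*} (s : Finset ι) (δ : ι → ℝ)
    (hδ : ∀ i ∈ s, 0 ≤ δ i) :
    min T (S + ∑ i ∈ s, δ i) - min T S ≤ ∑ i ∈ s, (min T (S + δ i) - min T S) := by
  classical
  induction s using Finset.induction with
  | empty => simp
  | @insert a s ha ih =>
    have hδa : 0 ≤ δ a := hδ a (Finset.mem_insert_self a s)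
    have hsum : 0 ≤ ∑ i ∈ s, δ i :=
      Finset.sum_nonneg fun i hi => hδ i (Finset.mem_insert_of_mem hi)
    have ih' := ih (fun i hi => hδ i (Finset.mem_insert_of_mem hi))
    rw [Finset.sum_insert ha, Finset.sum_insert ha]
    have key := stmt9_min_concave T S (S + ∑ i ∈ s, δ i) (δ a) (by linarith) hδa
    have he : S + ∑ i ∈ s, δ i + δ a = S + (δ a + ∑ i ∈ s, δ i) := by ring
    rw [he] at key
    linarith

lemma stmt9_rPath_submod {E : Type*} [Fintype E] [DecidableEq E] (f : E → ℕ → ℕ)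
    (hf : ∀ e, Monotone (f e)) (T : ℕ) (p : Finset E) (x y : E → ℕ) :
    rPath f T p (x + y) - rPath f T p x ≤
      ∑ e, (rPath f T p (x + Pi.single e (y e)) - rPath f T p x) := by
  classical
  set S : ℝ := ∑ e' ∈ p, (f e' (x e') : ℝ) with hS
  set δ : E → ℝ := fun e => (f e (x e + y e) : ℝ) - f e (x e) with hδ
  have hδ0 : ∀ e, 0 ≤ δ e := fun e => by
    simp only [hδ, sub_nonneg, Nat.cast_le]; exact hf e (Nat.le_add_right _ _)
  have hx : rPath f T p x = min (T:ℝ) S := rfl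
  have hxy : rPath f T p (x + y) = min (T:ℝ) (S + ∑ e ∈ p, δ e) := by
    unfold rPath; congr 1
    rw [hS, ← Finset.sum_add_distrib]
    refine Finset.sum_congr rfl fun e' _ => ?_
    simp [hδ, Pi.add_apply]
  have hsingle : ∀ e ∈ p, rPath f T p (x + Pi.single e (y e)) = min (T:ℝ) (S + δ e) := by
    intro e he
    unfold rPath; congr 1
    have h1 : ∀ e' ∈ p, (f e' ((x + Pi.single e (y e) : E → ℕ) e') : ℝ) =
        (f e' (x e') : ℝ) + (if e' = e then δ e else 0) := by
      intro e' _
      by_cases hne : e' = e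
      · subst hne; simp [hδ, Pi.single_apply]
      · simp [Pi.single_apply, hne]
    rw [Finset.sum_congr rfl h1, Finset.sum_add_distrib, hS]
    congr 1
    rw [Finset.sum_ite_eq' p e (fun _ => δ e)]
    simp [he]
  have hout : ∀ e, e ∉ p → rPath f T p (x + Pi.single e (y e)) = rPath f T p x := by
    intro e he
    unfold rPath; congr 1
    refine Finset.sum_congr rfl fun e' he' => ?_
    have hne : e' ≠ e := fun h => he (h ▸ he')
    simp [Pi.single_apply, hne]
  have hsum : ∑ e, (rPath f T p (x + Pi.single e (y e)) - rPath f T p x)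
      = ∑ e ∈ p, (min (T:ℝ) (S + δ e) - min (T:ℝ) S) := by
    rw [← Finset.sum_subset (Finset.subset_univ p)
      (fun e _ he => by rw [hout e he]; ring)]
    exact Finset.sum_congr rfl fun e he => by rw [hsingle e he, hx]
  rw [hsum, hxy, hx]
  exact stmt9_min_subadd (T:ℝ) S p δ (fun i _ => hδ0 i)

lemma stmt9_DSum_submod {E : Type*} [Fintype E] [DecidableEq E] (f : E → ℕ → ℕ)
    (hf : ∀ e, Monotone (f e)) (T : ℕ) (P : Finset (Finset E)) (x y : E → ℕ) :
    DSum f T P (x + y) - DSum f T P x ≤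
      ∑ e, (DSum f T P (x + Pi.single e (y e)) - DSum f T P x) := by
  have h2 : ∑ p ∈ P, (rPath f T p (x+y) - rPath f T p x) ≤
      ∑ p ∈ P, ∑ e, (rPath f T p (x + Pi.single e (y e)) - rPath f T p x) :=
    Finset.sum_le_sum fun p _ => stmt9_rPath_submod f hf T p x y
  rw [Finset.sum_comm] at h2
  unfold DSum
  rw [← Finset.sum_sub_distrib]
  refine h2.trans (le_of_eq (Finset.sum_congr rfl fun e _ => ?_))
  rw [Finset.sum_sub_distrib]

lemma stmt9_DSum_eq_nat {E : Type*} (f : E → ℕ → ℕ) (T : ℕ) (P : Finset (Finset E))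
    (x : E → ℕ) :
    DSum f T P x = ((∑ p ∈ P, min T (∑ e ∈ p, f e (x e)) : ℕ) : ℝ) := by
  unfold DSum rPath
  push_cast
  rfl

lemma stmt9_DSum_nonneg {E : Type*} (f : E → ℕ → ℕ) (T : ℕ) (P : Finset (Finset E))
    (x : E → ℕ) : 0 ≤ DSum f T P x := by
  refine Finset.sum_nonneg fun p _ => le_min (by positivity) (by positivity)

/-!
STATEMENT 9 (Approximation guarantee of the Adaptive Trading algorithm):
while `D(P, x_i) < |P|·T`, the budget spent so far satisfies `‖x_i‖ ≤ K·ln(|P|·T)`.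
Here `j·1_e = Pi.single e j`.
-/

theorem stmt_9 {E : Type*} [Fintype E] [Nonempty E] [DecidableEq E]
    (f : E → ℕ → ℕ) (hf : ∀ e, Monotone (f e)) (T : ℕ) (hT : 1 ≤ T)
    (P : Finset (Finset E)) (hP : P.Nonempty) (B : ℕ) (hB : 1 ≤ B)
    (K : ℕ) (hK : 1 ≤ K) (xstar : E → ℕ) (hxstarcost : ∑ e, xstar e = K)
    (hxstarbox : ∀ e, xstar e ≤ B)
    (hxstarblock : ∀ p ∈ P, T ≤ ∑ e ∈ p, f e (xstar e))
    (xs : ℕ → E → ℕ) (h0 : xs 0 = 0)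
    (hstep : ∀ i : ℕ, ∃ (e : E) (j : ℕ), 1 ≤ j ∧ j ≤ B ∧
      (∀ e' : E, ∀ j' : ℕ, 1 ≤ j' → j' ≤ B →
        (DSum f T P (xs i + Pi.single e' j') - DSum f T P (xs i)) / (j' : ℝ) ≤
          (DSum f T P (xs i + Pi.single e j) - DSum f T P (xs i)) / (j : ℝ)) ∧
      xs (i + 1) = xs i + Pi.single e j) :
    ∀ i : ℕ, DSum f T P (xs i) < (P.card : ℝ) * T →
      ((∑ e, xs i e : ℕ) : ℝ) ≤ K * Real.log ((P.card : ℝ) * T) := by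
  classical
  set M : ℝ := (P.card : ℝ) * T with hM
  have hKpos : (0:ℝ) < K := by exact_mod_cast hK
  have hDle : ∀ x : E → ℕ, DSum f T P x ≤ M := by
    intro x
    unfold DSum
    calc ∑ p ∈ P, rPath f T p x ≤ ∑ p ∈ P, (T:ℝ) :=
          Finset.sum_le_sum fun p _ => min_le_left _ _
      _ = M := by rw [Finset.sum_const, nsmul_eq_mul]
  have main : ∀ i, M - DSum f T P (xs i) ≤
      M * Real.exp (-((∑ e, xs i e : ℕ) : ℝ) / K) := by
    intro i
    induction i with
    | zero =>
      rw [h0]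
      have h1 : (∑ e, (0 : E → ℕ) e) = 0 := by simp
      rw [h1]
      simp only [Nat.cast_zero, neg_zero, zero_div, Real.exp_zero, mul_one]
      linarith [stmt9_DSum_nonneg f T P (0 : E → ℕ)]
    | succ i ih =>
      obtain ⟨e, j, hj1, hjB, hmax, hrec⟩ := hstep i
      set g : ℝ := DSum f T P (xs i + Pi.single e j) - DSum f T P (xs i) with hg
      have hjpos : (0:ℝ) < j := by exact_mod_cast hj1
      have hblockfull : DSum f T P (xs i + xstar) = M := by
        unfold DSum
        have hall : ∀ p ∈ P, rPath f T p (xs i + xstar) = (T:ℝ) := by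
          intro p hp
          unfold rPath
          rw [min_eq_left]
          have h1 : (T:ℝ) ≤ ∑ e' ∈ p, (f e' (xstar e') : ℝ) := by
            exact_mod_cast hxstarblock p hp
          refine h1.trans (Finset.sum_le_sum fun e' _ => ?_)
          exact_mod_cast hf e' (Nat.le_add_left (xstar e') (xs i e'))
        rw [Finset.sum_congr rfl hall, Finset.sum_const, nsmul_eq_mul]
      have hterm : ∀ e' : E, DSum f T P (xs i + Pi.single e' (xstar e')) -
          DSum f T P (xs i) ≤ (xstar e' : ℝ) * (g / j) := by
        intro e'
        by_cases hz : xstar e' = 0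
        · simp [hz]
        · have h1' : 1 ≤ xstar e' := Nat.one_le_iff_ne_zero.mpr hz
          have hpos : (0:ℝ) < xstar e' := by exact_mod_cast h1'
          have hm := hmax e' (xstar e') h1' (hxstarbox e')
          rw [div_le_iff₀ hpos] at hm
          exact hm.trans_eq (mul_comm _ _)
      have hPhi : M - DSum f T P (xs i) ≤ (K:ℝ) * (g / j) := by
        have h1 : M - DSum f T P (xs i) =
            DSum f T P (xs i + xstar) - DSum f T P (xs i) := by rw [hblockfull]
        rw [h1]
        refine (stmt9_DSum_submod f hf T P (xs i) xstar).trans ?_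
        have h2 : ∑ e', ((xstar e' : ℝ) * (g / j)) = (K:ℝ) * (g / j) := by
          rw [← Finset.sum_mul]
          congr 1
          exact_mod_cast congrArg (Nat.cast : ℕ → ℝ) hxstarcost
        rw [← h2]
        exact Finset.sum_le_sum fun e' _ => hterm e'
      have hgge : (j:ℝ)/K * (M - DSum f T P (xs i)) ≤ g := by
        have h3 : (j:ℝ)/K * (M - DSum f T P (xs i)) ≤ (j:ℝ)/K * ((K:ℝ) * (g / j)) :=
          mul_le_mul_of_nonneg_left hPhi (by positivity)
        have heq : (j:ℝ)/K * ((K:ℝ) * (g / j)) = g := by field_simp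
        linarith
      have hsumnat : (∑ e', xs (i+1) e') = (∑ e', xs i e') + j := by
        rw [hrec]
        simp [Finset.sum_add_distrib, Finset.sum_pi_single']
      have hΦ0 : 0 ≤ M - DSum f T P (xs i) := by linarith [hDle (xs i)]
      have hD1 : DSum f T P (xs (i+1)) = DSum f T P (xs i) + g := by
        rw [hrec, hg]; ring
      calc M - DSum f T P (xs (i+1)) = (M - DSum f T P (xs i)) - g := by
            rw [hD1]; ring
        _ ≤ (M - DSum f T P (xs i)) * (1 - (j:ℝ)/K) := by
            have h3 : (M - DSum f T P (xs i)) * (1 - (j:ℝ)/K) =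
                (M - DSum f T P (xs i)) - (j:ℝ)/K * (M - DSum f T P (xs i)) := by ring
            linarith
        _ ≤ (M - DSum f T P (xs i)) * Real.exp (-(j:ℝ)/K) := by
            have h4 := Real.add_one_le_exp (-(j:ℝ)/K)
            have h5 : 1 - (j:ℝ)/K ≤ Real.exp (-(j:ℝ)/K) := by
              rw [neg_div] at h4 ⊢; linarith
            exact mul_le_mul_of_nonneg_left h5 hΦ0
        _ ≤ M * Real.exp (-((∑ e', xs i e' : ℕ) : ℝ) / K) * Real.exp (-(j:ℝ)/K) :=
            mul_le_mul_of_nonneg_right ih (Real.exp_nonneg _)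
        _ = M * Real.exp (-((∑ e', xs (i+1) e' : ℕ) : ℝ) / K) := by
            rw [mul_assoc, ← Real.exp_add, hsumnat]
            push_cast
            ring_nf
  intro i hi
  have hΦ1 : (1:ℝ) ≤ M - DSum f T P (xs i) := by
    have hnat := stmt9_DSum_eq_nat f T P (xs i)
    set n : ℕ := ∑ p ∈ P, min T (∑ e ∈ p, f e (xs i e)) with hn
    have hlt : n < P.card * T := by
      have : (n : ℝ) < M := by rw [← hnat]; exact hi
      rw [hM] at this
      exact_mod_cast this
    have : (n:ℝ) + 1 ≤ M := by
      rw [hM]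
      have := Nat.succ_le_of_lt hlt
      exact_mod_cast this
    rw [hnat]
    linarith
  have hle := main i
  set s : ℝ := ((∑ e, xs i e : ℕ) : ℝ) with hs
  have h3 : (1:ℝ) ≤ M * Real.exp (-s/K) := le_trans hΦ1 hle
  have h2 : Real.exp (s/K) ≤ M := by
    calc Real.exp (s/K) = Real.exp (s/K) * 1 := (mul_one _).symm
      _ ≤ Real.exp (s/K) * (M * Real.exp (-s/K)) :=
          mul_le_mul_of_nonneg_left h3 (Real.exp_nonneg _)
      _ = M * (Real.exp (s/K) * Real.exp (-s/K)) := by ring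
      _ = M := by
          rw [← Real.exp_add, neg_div, add_neg_cancel, Real.exp_zero, mul_one]
  have hlog : s/K ≤ Real.log M := by
    have h5 := Real.log_le_log (Real.exp_pos (s/K)) h2
    rwa [Real.log_exp] at h5
  rw [div_le_iff₀ hKpos] at hlog
  linarith [hlog]
end

section
/- (Greedy selection on the estimator, Lemma 5.) Suppose the family {f_e} has concave ratio γ with 0 < γ ≤ 1, and let g(x) = ∑_{p∈P} β_p·r(p,x) for a finite collection P of paths and nonnegative real coefficients (β_p). Fix a budget vector x and a natural number q ≥ 1. Define v_0 = 0 and v_{i+1} = v_i + u_i for 0 ≤ i < q, where u_i is a unit vector maximizing g(x + v_i + u) over all unit vectors u, and set v = v_q. Then for every budget vector v° with ‖v°‖ = q: g(x+v) - g(x) ≥ (1 - e^{-γ})·(g(x+v°) - g(x)). -/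
lemma gComb_mono {E : Type*} [Fintype E] (f : E → ℕ → ℕ) (hf : ∀ e, Monotone (f e)) (T : ℕ)
    (P : Finset (Finset E)) (β : Finset E → ℝ) (hβ : ∀ p ∈ P, 0 ≤ β p)
    {y z : E → ℕ} (hyz : ∀ e, y e ≤ z e) :
    gComb f T P β y ≤ gComb f T P β z := by
  unfold gComb rPath
  refine Finset.sum_le_sum fun p hp => ?_
  refine mul_le_mul_of_nonneg_left ?_ (hβ p hp)
  exact min_le_min le_rfl (Finset.sum_le_sum fun e _ => by exact_mod_cast hf e (hyz e))

lemma key_min (T S S₀ d d₀ γ : ℝ) (hS : S₀ ≤ S) (hd : 0 ≤ d) (hd0 : 0 ≤ d₀)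
    (hγ0 : 0 ≤ γ) (hγ1 : γ ≤ 1) (hdd : γ * d ≤ d₀) :
    γ * (min T (S + d) - min T S) ≤ min T (S₀ + d₀) - min T S₀ := by
  rcases le_total T S with h1 | h1
  · rw [min_eq_left h1, min_eq_left (by linarith)]
    have : min T S₀ ≤ min T (S₀ + d₀) := min_le_min le_rfl (by linarith)
    linarith
  · rw [min_eq_right h1, min_eq_right (le_trans hS h1)]
    rcases le_total T (S + d) with h2 | h2 <;> rcases le_total T (S₀ + d₀) with h3 | h3
    · rw [min_eq_left h2, min_eq_left h3]; nlinarith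
    · rw [min_eq_left h2, min_eq_right h3]; nlinarith
    · rw [min_eq_right h2, min_eq_left h3]; nlinarith
    · rw [min_eq_right h2, min_eq_right h3]; nlinarith

lemma rPath_submod {E : Type*} [DecidableEq E] (f : E → ℕ → ℕ) (hf : ∀ e, Monotone (f e))
    (T : ℕ) (γ : ℝ) (hγ0 : 0 ≤ γ) (hγ1 : γ ≤ 1) (hconc : HasConcaveRatio f γ)
    {y₀ y : E → ℕ} (h : ∀ e, y₀ e ≤ y e) (e₀ : E) (p : Finset E) :
    γ * (rPath f T p (y + Pi.single e₀ 1) - rPath f T p y) ≤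
      rPath f T p (y₀ + Pi.single e₀ 1) - rPath f T p y₀ := by
  by_cases he : e₀ ∈ p
  · have hsum : ∀ z : E → ℕ, ∑ e ∈ p, ((f e ((z + Pi.single e₀ 1 : E → ℕ) e) : ℝ)) =
        ∑ e ∈ p, (f e (z e) : ℝ) + ((f e₀ (z e₀ + 1) : ℝ) - (f e₀ (z e₀) : ℝ)) := by
      intro z
      have h1 : ∑ e ∈ p, ((f e ((z + Pi.single e₀ 1 : E → ℕ) e) : ℝ) - (f e (z e) : ℝ)) =
          (f e₀ (z e₀ + 1) : ℝ) - (f e₀ (z e₀) : ℝ) := by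
        rw [Finset.sum_eq_single e₀]
        · simp [Pi.add_apply, Pi.single_eq_same]
        · intro e _ hne; simp [Pi.add_apply, Pi.single_eq_of_ne hne]
        · intro h'; exact absurd he h'
      rw [Finset.sum_sub_distrib] at h1; linarith
    unfold rPath
    rw [hsum y, hsum y₀]
    refine key_min _ _ _ _ _ _ ?_ ?_ ?_ hγ0 hγ1 ?_
    · exact Finset.sum_le_sum fun e _ => by exact_mod_cast hf e (h e)
    · have := hf e₀ (Nat.le_succ (y e₀)); simp only [sub_nonneg]; exact_mod_cast this
    · have := hf e₀ (Nat.le_succ (y₀ e₀)); simp only [sub_nonneg]; exact_mod_cast this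
    · exact hconc e₀ (y₀ e₀) (y e₀) (h e₀)
  · have hsame : ∀ z : E → ℕ, rPath f T p (z + Pi.single e₀ 1) = rPath f T p z := by
      intro z; unfold rPath; congr 1
      refine Finset.sum_congr rfl fun e hep => ?_
      have hne : e ≠ e₀ := fun h' => he (h' ▸ hep)
      simp [Pi.single_eq_of_ne hne]
    rw [hsame, hsame]; simp

lemma gComb_submod {E : Type*} [DecidableEq E] (f : E → ℕ → ℕ) (hf : ∀ e, Monotone (f e))
    (T : ℕ) (γ : ℝ) (hγ0 : 0 ≤ γ) (hγ1 : γ ≤ 1) (hconc : HasConcaveRatio f γ)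
    (P : Finset (Finset E)) (β : Finset E → ℝ) (hβ : ∀ p ∈ P, 0 ≤ β p)
    {y₀ y : E → ℕ} (h : ∀ e, y₀ e ≤ y e) (e₀ : E) :
    γ * (gComb f T P β (y + Pi.single e₀ 1) - gComb f T P β y) ≤
      gComb f T P β (y₀ + Pi.single e₀ 1) - gComb f T P β y₀ := by
  unfold gComb
  rw [← Finset.sum_sub_distrib, ← Finset.sum_sub_distrib, Finset.mul_sum]
  refine Finset.sum_le_sum fun p hp => ?_
  have hkey := rPath_submod f hf T γ hγ0 hγ1 hconc h e₀ p
  calc γ * (β p * rPath f T p (y + Pi.single e₀ 1) - β p * rPath f T p y)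
      = β p * (γ * (rPath f T p (y + Pi.single e₀ 1) - rPath f T p y)) := by ring
    _ ≤ β p * (rPath f T p (y₀ + Pi.single e₀ 1) - rPath f T p y₀) :=
        mul_le_mul_of_nonneg_left hkey (hβ p hp)
    _ = β p * rPath f T p (y₀ + Pi.single e₀ 1) - β p * rPath f T p y₀ := by ring

lemma step_bound {E : Type*} [Fintype E] [DecidableEq E] (f : E → ℕ → ℕ)
    (hf : ∀ e, Monotone (f e)) (T : ℕ) (γ : ℝ) (hγ0 : 0 ≤ γ) (hγ1 : γ ≤ 1)
    (hconc : HasConcaveRatio f γ)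
    (P : Finset (Finset E)) (β : Finset E → ℝ) (hβ : ∀ p ∈ P, 0 ≤ β p)
    (y : E → ℕ) (C : ℝ)
    (hC : ∀ e₀ : E, gComb f T P β (y + Pi.single e₀ 1) - gComb f T P β y ≤ C) :
    ∀ (n : ℕ) (w : E → ℕ), ∑ e, w e = n →
      γ * (gComb f T P β (y + w) - gComb f T P β y) ≤ (n : ℝ) * C := by
  intro n
  induction n with
  | zero =>
    intro w hw
    have hz : ∀ e, w e = 0 := by
      intro e
      exact Nat.eq_zero_of_le_zero (hw ▸ Finset.single_le_sum (fun e _ => Nat.zero_le _)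
        (Finset.mem_univ e))
    have : y + w = y := by funext e; simp [hz e]
    simp [this]
  | succ n ih =>
    intro w hw
    obtain ⟨e₀, he₀⟩ : ∃ e, w e ≠ 0 := by
      by_contra hcon
      push_neg at hcon
      simp [hcon] at hw
    set w' : E → ℕ := Function.update w e₀ (w e₀ - 1) with hw'def
    have hdecomp : w = w' + Pi.single e₀ 1 := by
      funext e
      by_cases h : e = e₀
      · subst h; simp [hw'def, Function.update_self, Pi.single_eq_same]; omega
      · simp [hw'def, Function.update_of_ne h, Pi.single_eq_of_ne h]
    have hsum' : ∑ e, w' e = n := by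
      have h2 : ∑ e, ((w' + Pi.single e₀ 1 : E → ℕ)) e = n + 1 := by
        rw [← hdecomp]; exact hw
      simp only [Pi.add_apply, Finset.sum_add_distrib] at h2
      have h3 : ∑ e, (Pi.single e₀ 1 : E → ℕ) e = 1 := by
        simp [Finset.sum_pi_single']
      omega
    have hle : ∀ e, y e ≤ (y + w') e := fun e => by simp
    have hsub := gComb_submod f hf T γ hγ0 hγ1 hconc P β hβ hle e₀
    have hih := ih w' hsum'
    have hCe := hC e₀
    have heq : y + w = y + w' + Pi.single e₀ 1 := by rw [hdecomp, add_assoc]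
    rw [heq]
    push_cast
    nlinarith [hsub, hih, hCe]

/-!
STATEMENT 11 (Greedy selection on the estimator, Lemma 5): after `q` greedy unit steps,
`g(x+v) - g(x) ≥ (1 - e^{-γ})·(g(x+v°) - g(x))` for every `v°` with `‖v°‖ = q`.
-/

theorem stmt_11 {E : Type*} [Fintype E] [Nonempty E] [DecidableEq E]
    (f : E → ℕ → ℕ) (hf : ∀ e, Monotone (f e)) (T : ℕ) (hT : 1 ≤ T)
    (γ : ℝ) (hγ0 : 0 < γ) (hγ1 : γ ≤ 1) (hconc : HasConcaveRatio f γ)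
    (P : Finset (Finset E)) (β : Finset E → ℝ) (hβ : ∀ p ∈ P, 0 ≤ β p)
    (x : E → ℕ) (q : ℕ) (hq : 1 ≤ q)
    (v : ℕ → E → ℕ) (h0 : v 0 = 0)
    (hstep : ∀ i : ℕ, i < q → ∃ u : E → ℕ, IsUnitVec u ∧
      (∀ u' : E → ℕ, IsUnitVec u' →
        gComb f T P β (x + v i + u') ≤ gComb f T P β (x + v i + u)) ∧
      v (i + 1) = v i + u) :
    ∀ vo : E → ℕ, ∑ e, vo e = q →
      (1 - Real.exp (-γ)) * (gComb f T P β (x + vo) - gComb f T P β x) ≤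
        gComb f T P β (x + v q) - gComb f T P β x := by
  intro vo hvo
  have hq' : (0 : ℝ) < (q : ℝ) := by exact_mod_cast Nat.lt_of_lt_of_le Nat.zero_lt_one hq
  set G := gComb f T P β with hGdef
  have hmono : ∀ {y z : E → ℕ}, (∀ e, y e ≤ z e) → G y ≤ G z :=
    fun h => gComb_mono f hf T P β hβ h
  set a : ℕ → ℝ := fun i => G (x + vo) - G (x + v i) with hadef
  have hx0 : x + v 0 = x := by rw [h0]; funext e; simp
  have ha0 : 0 ≤ a 0 := by
    have : G x ≤ G (x + vo) := hmono fun e => by simp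
    simp only [hadef, hx0]
    linarith
  have hstep' : ∀ i, i < q → a (i + 1) ≤ (1 - γ / (q : ℝ)) * a i := by
    intro i hi
    obtain ⟨u, hunit, hbest, hv⟩ := hstep i hi
    set C := G (x + v i + u) - G (x + v i) with hCdef
    have hC : ∀ e₀ : E, G (x + v i + Pi.single e₀ 1) - G (x + v i) ≤ C := by
      intro e₀
      have := hbest (Pi.single e₀ 1) ⟨e₀, rfl⟩
      simp only [hCdef, hGdef]
      linarith [this]
    have h1 : γ * (G (x + v i + vo) - G (x + v i)) ≤ (q : ℝ) * C := by
      have := step_bound f hf T γ (le_of_lt hγ0) hγ1 hconc P β hβ (x + v i) C hC q vo hvo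
      rw [add_assoc] at this ⊢
      exact this
    have h2 : G (x + vo) ≤ G (x + v i + vo) :=
      hmono fun e => by
        show x e + vo e ≤ x e + v i e + vo e
        omega
    have h3 : γ * a i ≤ (q : ℝ) * C := by
      have : a i ≤ G (x + v i + vo) - G (x + v i) := by simp only [hadef]; linarith
      nlinarith
    have hC' : C = a i - a (i + 1) := by
      simp only [hCdef, hadef, hv]
      rw [← add_assoc]
      ring
    rw [hC'] at h3
    have h4 : γ * a i / (q : ℝ) ≤ a i - a (i + 1) := by
      rw [div_le_iff₀ hq']
      linarith
    have h5 : (1 - γ / (q : ℝ)) * a i = a i - γ * a i / (q : ℝ) := by ring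
    linarith
  have hbase : 0 ≤ 1 - γ / (q : ℝ) := by
    have h1 : (1 : ℝ) ≤ (q : ℝ) := by exact_mod_cast hq
    have : γ / (q : ℝ) ≤ 1 := by rw [div_le_one hq']; linarith
    linarith
  have hiter : ∀ i, i ≤ q → a i ≤ (1 - γ / (q : ℝ)) ^ i * a 0 := by
    intro i
    induction i with
    | zero => intro _; simp
    | succ n ih =>
      intro hn
      have h1 := hstep' n (by omega)
      have h2 := ih (by omega)
      calc a (n + 1) ≤ (1 - γ / (q : ℝ)) * a n := h1
        _ ≤ (1 - γ / (q : ℝ)) * ((1 - γ / (q : ℝ)) ^ n * a 0) :=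
            mul_le_mul_of_nonneg_left h2 hbase
        _ = (1 - γ / (q : ℝ)) ^ (n + 1) * a 0 := by ring
  have hexp : (1 - γ / (q : ℝ)) ^ q ≤ Real.exp (-γ) := by
    have h1 : 1 - γ / (q : ℝ) ≤ Real.exp (-(γ / (q : ℝ))) := by
      linarith [Real.add_one_le_exp (-(γ / (q : ℝ)))]
    calc (1 - γ / (q : ℝ)) ^ q ≤ (Real.exp (-(γ / (q : ℝ)))) ^ q :=
          pow_le_pow_left₀ hbase h1 q
      _ = Real.exp ((q : ℝ) * (-(γ / (q : ℝ)))) := (Real.exp_nat_mul _ q).symm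
      _ = Real.exp (-γ) := by
          congr 1
          field_simp
  have haq := hiter q le_rfl
  have hpow0 : (0:ℝ) ≤ (1 - γ / (q : ℝ)) ^ q := pow_nonneg hbase q
  have hfin : a q ≤ Real.exp (-γ) * a 0 :=
    le_trans haq (mul_le_mul_of_nonneg_right hexp ha0)
  have ha0eq : a 0 = G (x + vo) - G x := by simp only [hadef, hx0]
  have haqeq : a q = G (x + vo) - G (x + v q) := rfl
  have : (1 - Real.exp (-γ)) * (G (x + vo) - G x) ≤ G (x + v q) - G x := by
    nlinarith [hfin, ha0eq, haqeq]
  exact this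
end

section
/- (Splitting lemma for the sampling algorithm.) Suppose the family {f_e} has concave ratio γ with 0 < γ ≤ 1, and let g(x) = ∑_{p∈P} β_p·r(p,x) for a finite collection P of paths and nonnegative real coefficients (β_p). Let x be a budget vector and let L_1, …, L_l (l ≥ 1) be budget vectors with z = L_1 + ⋯ + L_l. Then there exists an index j with 1 ≤ j ≤ l such that g(x + L_j) - g(x) ≥ (γ/l)·(g(x+z) - g(x)). -/
lemma block_lemma (f : ℕ → ℕ) (γ : ℝ)
    (hc : ∀ a b : ℕ, a ≤ b → γ * ((f (b+1) : ℝ) - f b) ≤ (f (a+1) : ℝ) - f a)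
    (a : ℕ) : ∀ m o : ℕ, γ * ((f (a+o+m) : ℝ) - f (a+o)) ≤ (f (a+m) : ℝ) - f a := by
  intro m
  induction m with
  | zero => intro o; simp
  | succ m ih =>
    intro o
    have h1 := hc (a+m) (a+o+m) (by omega)
    have h2 := ih o
    have e1 : a + o + (m+1) = (a+o+m) + 1 := by ring
    have e2 : a + (m+1) = (a+m) + 1 := by ring
    rw [e1, e2]
    nlinarith [h1, h2]

lemma sum_split_lemma (f : ℕ → ℕ) (γ : ℝ)
    (hc : ∀ a b : ℕ, a ≤ b → γ * ((f (b+1) : ℝ) - f b) ≤ (f (a+1) : ℝ) - f a)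
    (a : ℕ) {ι : Type*} [DecidableEq ι] (s : Finset ι) (m : ι → ℕ) :
    γ * ((f (a + ∑ j ∈ s, m j) : ℝ) - f a) ≤ ∑ j ∈ s, ((f (a + m j) : ℝ) - f a) := by
  induction s using Finset.induction with
  | empty => simp
  | @insert j s hj ih =>
    rw [Finset.sum_insert hj, Finset.sum_insert hj]
    have hb := block_lemma f γ hc a (m j) (∑ j ∈ s, m j)
    have e1 : a + (m j + ∑ j ∈ s, m j) = a + (∑ j ∈ s, m j) + m j := by ring
    rw [e1]
    nlinarith [hb, ih]

/-- Key per-path inequality. -/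
lemma rPath_split {E : Type*} [DecidableEq E]
    (f : E → ℕ → ℕ) (hf : ∀ e, Monotone (f e)) (T : ℕ)
    (γ : ℝ) (hγ0 : 0 < γ) (hγ1 : γ ≤ 1) (hconc : HasConcaveRatio f γ)
    (p : Finset E) (x : E → ℕ) (l : ℕ) (L : Fin l → E → ℕ) (z : E → ℕ)
    (hz : z = ∑ j, L j) :
    γ * (rPath f T p (x + z) - rPath f T p x) ≤
      ∑ j : Fin l, (rPath f T p (x + L j) - rPath f T p x) := by
  set S : (E → ℕ) → ℝ := fun y => ∑ e ∈ p, (f e (y e) : ℝ) with hS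
  have hSmono : ∀ y w : E → ℕ, (∀ e, y e ≤ w e) → S y ≤ S w := by
    intro y w h
    exact Finset.sum_le_sum (fun e _ => by exact_mod_cast hf e (h e))
  have hxz : S x ≤ S (x + z) := hSmono x (x + z) (fun e => by simp)
  have hxL : ∀ j, S x ≤ S (x + L j) := fun j => hSmono x (x + L j) (fun e => by simp)
  have hr : ∀ y, rPath f T p y = min (T : ℝ) (S y) := fun y => rfl
  -- main sum inequality
  have hsum : γ * (S (x + z) - S x) ≤ ∑ j : Fin l, (S (x + L j) - S x) := by
    have key : ∀ e ∈ p, γ * ((f e ((x+z) e) : ℝ) - f e (x e)) ≤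
        ∑ j : Fin l, ((f e ((x + L j) e) : ℝ) - f e (x e)) := by
      intro e _
      have hze : (x + z) e = x e + ∑ j : Fin l, L j e := by
        simp [hz, Pi.add_apply, Finset.sum_apply]
      rw [hze]
      have := sum_split_lemma (f e) γ (fun a b hab => hconc e a b hab) (x e)
        (Finset.univ : Finset (Fin l)) (fun j => L j e)
      simpa using this
    calc γ * (S (x + z) - S x) = ∑ e ∈ p, γ * ((f e ((x+z) e) : ℝ) - f e (x e)) := by
          simp only [hS]
          rw [← Finset.sum_sub_distrib, Finset.mul_sum]
      _ ≤ ∑ e ∈ p, ∑ j : Fin l, ((f e ((x + L j) e) : ℝ) - f e (x e)) :=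
          Finset.sum_le_sum key
      _ = ∑ j : Fin l, (S (x + L j) - S x) := by
          rw [Finset.sum_comm]
          simp only [hS]
          exact Finset.sum_congr rfl (fun j _ => by rw [Finset.sum_sub_distrib])
  simp only [hr]
  by_cases hTx : (T : ℝ) ≤ S x
  · have h1 : min (T : ℝ) (S x) = T := min_eq_left hTx
    have h2 : min (T : ℝ) (S (x + z)) = T := min_eq_left (hTx.trans hxz)
    rw [h1, h2]
    simp only [sub_self, mul_zero]
    apply Finset.sum_nonneg
    intro j _
    rw [min_eq_left (hTx.trans (hxL j))]
    simp
  · push_neg at hTx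
    have h1 : min (T : ℝ) (S x) = S x := min_eq_right hTx.le
    rw [h1]
    by_cases hall : ∀ j : Fin l, S (x + L j) ≤ T
    · have : ∀ j : Fin l, min (T : ℝ) (S (x + L j)) = S (x + L j) :=
        fun j => min_eq_right (hall j)
      simp only [this]
      have hmin : min (T : ℝ) (S (x + z)) ≤ S (x + z) := min_le_right _ _
      have : γ * (min (T : ℝ) (S (x + z)) - S x) ≤ γ * (S (x + z) - S x) := by
        apply mul_le_mul_of_nonneg_left _ hγ0.le
        linarith
      linarith
    · push_neg at hall
      obtain ⟨j₀, hj₀⟩ := hall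
      have hterm : (T : ℝ) - S x ≤ ∑ j : Fin l, (min (T : ℝ) (S (x + L j)) - S x) := by
        have : ∑ j : Fin l, (min (T : ℝ) (S (x + L j)) - S x) ≥
            ∑ j ∈ ({j₀} : Finset (Fin l)), (min (T : ℝ) (S (x + L j)) - S x) := by
          apply Finset.sum_le_sum_of_subset_of_nonneg (Finset.subset_univ _)
          intro j _ _
          have : S x ≤ min (T : ℝ) (S (x + L j)) := le_min hTx.le (hxL j)
          linarith
        have hj0 : min (T : ℝ) (S (x + L j₀)) = T := min_eq_left hj₀.le
        simp only [Finset.sum_singleton, hj0] at this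
        linarith
      have hd : 0 ≤ min (T : ℝ) (S (x + z)) - S x := by
        have : S x ≤ min (T : ℝ) (S (x + z)) := le_min hTx.le hxz
        linarith
      have hmT : min (T : ℝ) (S (x + z)) ≤ T := min_le_left _ _
      calc γ * (min (T : ℝ) (S (x + z)) - S x) ≤ min (T : ℝ) (S (x + z)) - S x := by
            nlinarith
        _ ≤ (T : ℝ) - S x := by linarith
        _ ≤ _ := hterm

theorem stmt_12 {E : Type*} [Fintype E] [Nonempty E] [DecidableEq E]
    (f : E → ℕ → ℕ) (hf : ∀ e, Monotone (f e)) (T : ℕ) (hT : 1 ≤ T)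
    (γ : ℝ) (hγ0 : 0 < γ) (hγ1 : γ ≤ 1) (hconc : HasConcaveRatio f γ)
    (P : Finset (Finset E)) (β : Finset E → ℝ) (hβ : ∀ p ∈ P, 0 ≤ β p)
    (x : E → ℕ) (l : ℕ) (hl : 1 ≤ l)
    (L : Fin l → E → ℕ) (z : E → ℕ) (hz : z = ∑ j, L j) :
    ∃ j : Fin l, (γ / l) * (gComb f T P β (x + z) - gComb f T P β x) ≤
      gComb f T P β (x + L j) - gComb f T P β x := by
  have hg : γ * (gComb f T P β (x + z) - gComb f T P β x) ≤
      ∑ j : Fin l, (gComb f T P β (x + L j) - gComb f T P β x) := by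
    calc γ * (gComb f T P β (x + z) - gComb f T P β x)
        = ∑ p ∈ P, β p * (γ * (rPath f T p (x + z) - rPath f T p x)) := by
          simp only [gComb, ← Finset.sum_sub_distrib, Finset.mul_sum]
          exact Finset.sum_congr rfl (fun p _ => by ring)
      _ ≤ ∑ p ∈ P, β p * (∑ j : Fin l, (rPath f T p (x + L j) - rPath f T p x)) := by
          apply Finset.sum_le_sum
          intro p hp
          exact mul_le_mul_of_nonneg_left
            (rPath_split f hf T γ hγ0 hγ1 hconc p x l L z hz) (hβ p hp)
      _ = ∑ j : Fin l, (gComb f T P β (x + L j) - gComb f T P β x) := by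
          simp_rw [Finset.mul_sum]
          rw [Finset.sum_comm]
          exact Finset.sum_congr rfl (fun j _ => by
            simp only [gComb, ← Finset.sum_sub_distrib]
            exact Finset.sum_congr rfl (fun p _ => by ring))
  have hlpos : (0 : ℝ) < l := by exact_mod_cast hl
  have hconst : ∑ _j : Fin l, (γ / l) * (gComb f T P β (x + z) - gComb f T P β x) =
      γ * (gComb f T P β (x + z) - gComb f T P β x) := by
    rw [Finset.sum_const, Finset.card_univ, Fintype.card_fin, nsmul_eq_mul]
    field_simp
  have hne : (Finset.univ : Finset (Fin l)).Nonempty := by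
    haveI : Nonempty (Fin l) := Fin.pos_iff_nonempty.mp hl
    exact Finset.univ_nonempty
  have h2 : ∑ _j : Fin l, (γ / l) * (gComb f T P β (x + z) - gComb f T P β x) ≤
      ∑ j : Fin l, (gComb f T P β (x + L j) - gComb f T P β x) := by
    rw [hconst]; exact hg
  obtain ⟨j, _, hj⟩ := Finset.exists_le_of_sum_le hne h2
  exact ⟨j, hj⟩
end

section
/- (Failure probability of randomized rounding for one path.) Let P be a finite nonempty set, and for each e ∈ P let β_e be a positive real with β_e ≤ β (for some fixed real β > 0), let ρ_e ∈ (0,1), and let η ≥ 1 be a real with η·ρ_e < 1 for all e ∈ P and η·(1 - e^{-β})/β ≥ 1. Let (X_e)_{e∈P} be independent Bernoulli random variables with Pr[X_e = 1] = η·ρ_e. Let T_p be a real number with 1 ≤ T_p ≤ ∑_{e∈P} β_e·ρ_e. Then Pr[ ∑_{e∈P} β_e·X_e < T_p ] ≤ exp( -( η·(1 - e^{-β})/β - 1 ) ). -/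
open MeasureTheory ProbabilityTheory

lemma aux_mgf_bernoulli {Ω : Type*} [MeasurableSpace Ω] (μ : Measure Ω) [IsProbabilityMeasure μ]
    (b p : ℝ) (hp0 : 0 ≤ p) (X : Ω → ℝ) (hm : Measurable X)
    (hval : ∀ᵐ ω ∂μ, X ω = 0 ∨ X ω = 1)
    (hprob : μ {ω | X ω = 1} = ENNReal.ofReal p) :
    mgf (fun ω => b * X ω) μ (-1) = 1 - p * (1 - Real.exp (-b)) := by
  have hs : MeasurableSet {ω | X ω = 1} := hm (measurableSet_singleton 1)
  have hcong : (fun ω => Real.exp ((-1) * (b * X ω))) =ᵐ[μ]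
      (fun ω => Set.indicator {ω | X ω = 1} (fun _ => Real.exp (-b) - 1) ω + 1) := by
    filter_upwards [hval] with ω hω
    rcases hω with h | h
    · have : ω ∉ {ω | X ω = 1} := by simp [Set.mem_setOf_eq, h]
      simp [h, Set.indicator_of_notMem this]
    · have : ω ∈ {ω | X ω = 1} := h
      simp [h, Set.indicator_of_mem this]
  rw [mgf, integral_congr_ae hcong, integral_add ((integrable_const _).indicator hs)
    (integrable_const 1), integral_indicator_const _ hs, integral_const]
  simp [measureReal_def, hprob, ENNReal.toReal_ofReal hp0, measure_univ]
  ring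

lemma aux_exp_convex (β b : ℝ) (hβ : 0 < β) (hb : 0 < b) (hbβ : b ≤ β) :
    (b / β) * (1 - Real.exp (-β)) ≤ 1 - Real.exp (-b) := by
  set t := b / β with ht
  have ht0 : 0 ≤ t := by positivity
  have ht1 : t ≤ 1 := by rw [ht, div_le_one hβ]; exact hbβ
  have hconv := convexOn_exp.2 (Set.mem_univ (0:ℝ)) (Set.mem_univ (-β))
    (by linarith : (0:ℝ) ≤ 1 - t) ht0 (by ring)
  have harg : (1 - t) • (0:ℝ) + t • (-β) = -b := by
    simp only [smul_eq_mul]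
    rw [ht, mul_zero, zero_add, mul_neg, div_mul_cancel₀ b hβ.ne']
  rw [harg] at hconv
  simp only [smul_eq_mul, Real.exp_zero, mul_one] at hconv
  nlinarith

/-!
STATEMENT 16 (Failure probability of randomized rounding for one path): with independent
Bernoulli variables `X_e` with `Pr[X_e = 1] = η·ρ_e`, and `1 ≤ T_p ≤ ∑ β_e·ρ_e`,
`Pr[∑ β_e·X_e < T_p] ≤ exp(-(η·(1-e^{-β})/β - 1))`.
-/

theorem stmt_16 {Ω : Type*} [MeasurableSpace Ω] (μ : Measure Ω) [IsProbabilityMeasure μ]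
    {ι : Type*} [Fintype ι] [Nonempty ι]
    (β : ℝ) (hβ : 0 < β)
    (βc : ι → ℝ) (hβc : ∀ e, 0 < βc e) (hβcβ : ∀ e, βc e ≤ β)
    (ρ : ι → ℝ) (hρ0 : ∀ e, 0 < ρ e) (hρ1 : ∀ e, ρ e < 1)
    (η : ℝ) (hη : 1 ≤ η) (hηρ : ∀ e, η * ρ e < 1)
    (hηβ : 1 ≤ η * (1 - Real.exp (-β)) / β)
    (X : ι → Ω → ℝ) (hmeas : ∀ e, Measurable (X e))
    (hindep : iIndepFun X μ)
    (hval : ∀ e, ∀ᵐ ω ∂μ, X e ω = 0 ∨ X e ω = 1)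
    (hprob : ∀ e, μ {ω | X e ω = 1} = ENNReal.ofReal (η * ρ e))
    (Tp : ℝ) (hTp1 : 1 ≤ Tp) (hTp2 : Tp ≤ ∑ e, βc e * ρ e) :
    μ {ω | ∑ e, βc e * X e ω < Tp} ≤
      ENNReal.ofReal (Real.exp (-(η * (1 - Real.exp (-β)) / β - 1))) := by
  classical
  set K : ℝ := η * (1 - Real.exp (-β)) / β with hK
  set Y : ι → Ω → ℝ := fun e ω => βc e * X e ω with hY
  set S : Ω → ℝ := fun ω => ∑ e, βc e * X e ω with hS
  have hp0 : ∀ e, 0 ≤ η * ρ e := fun e => by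
    have := hρ0 e; nlinarith
  -- independence of the scaled variables
  have hindepY : iIndepFun Y μ := by
    have := hindep.comp (fun e (x : ℝ) => βc e * x) (fun e => measurable_const_mul _)
    exact this
  have hmeasY : ∀ e, Measurable (Y e) := fun e => (hmeas e).const_mul _
  -- mgf of the sum
  have hsumY : S = ∑ e, Y e := by
    funext ω; simp [hS, hY, Finset.sum_apply]
  have hmgf_sum : mgf S μ (-1) = ∏ e, mgf (Y e) μ (-1) := by
    rw [hsumY]; exact hindepY.mgf_sum hmeasY Finset.univ
  -- value of each mgf
  have hmgf_e : ∀ e, mgf (Y e) μ (-1) = 1 - (η * ρ e) * (1 - Real.exp (-(βc e))) :=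
    fun e => aux_mgf_bernoulli μ (βc e) (η * ρ e) (hp0 e) (X e) (hmeas e) (hval e) (hprob e)
  -- bound each factor
  have hfac_nonneg : ∀ e, 0 ≤ 1 - (η * ρ e) * (1 - Real.exp (-(βc e))) := by
    intro e
    have h1 : η * ρ e < 1 := hηρ e
    have h2 : 0 < Real.exp (-(βc e)) := Real.exp_pos _
    nlinarith [hp0 e]
  have hfac_le : ∀ e, 1 - (η * ρ e) * (1 - Real.exp (-(βc e))) ≤
      Real.exp (-((η * ρ e) * (1 - Real.exp (-(βc e))))) := by
    intro e
    have := Real.add_one_le_exp (-((η * ρ e) * (1 - Real.exp (-(βc e)))))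
    linarith
  -- bound the product
  have hprod : mgf S μ (-1) ≤ Real.exp (-∑ e, (η * ρ e) * (1 - Real.exp (-(βc e)))) := by
    rw [hmgf_sum]
    calc (∏ e, mgf (Y e) μ (-1))
        ≤ ∏ e, Real.exp (-((η * ρ e) * (1 - Real.exp (-(βc e))))) := by
          refine Finset.prod_le_prod (fun e _ => ?_) (fun e _ => ?_)
          · rw [hmgf_e e]; exact hfac_nonneg e
          · rw [hmgf_e e]; exact hfac_le e
      _ = Real.exp (-∑ e, (η * ρ e) * (1 - Real.exp (-(βc e)))) := by
          rw [← Real.exp_sum, ← Finset.sum_neg_distrib]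
  -- bound the sum from below
  have hsum_ge : K * Tp ≤ ∑ e, (η * ρ e) * (1 - Real.exp (-(βc e))) := by
    have hterm : ∀ e, K * (βc e * ρ e) ≤ (η * ρ e) * (1 - Real.exp (-(βc e)))  := by
      intro e
      have hcv := aux_exp_convex β (βc e) hβ (hβc e) (hβcβ e)
      have hηρe : 0 ≤ η * ρ e := hp0 e
      have : K * (βc e * ρ e) = (η * ρ e) * ((βc e / β) * (1 - Real.exp (-β))) := by
        rw [hK]; ring
      rw [this]
      exact mul_le_mul_of_nonneg_left hcv hηρe
    calc K * Tp ≤ K * ∑ e, βc e * ρ e := by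
          refine mul_le_mul_of_nonneg_left hTp2 ?_
          linarith
      _ = ∑ e, K * (βc e * ρ e) := by rw [Finset.mul_sum]
      _ ≤ ∑ e, (η * ρ e) * (1 - Real.exp (-(βc e))) :=
          Finset.sum_le_sum (fun e _ => hterm e)
  have hmgf_le : mgf S μ (-1) ≤ Real.exp (-(K * Tp)) := by
    refine hprod.trans (Real.exp_le_exp.2 ?_)
    linarith
  -- integrability for Chernoff
  have hSmeas : Measurable S := by
    apply Finset.measurable_sum
    intro e _
    exact (hmeas e).const_mul _
  have hSnonneg : ∀ᵐ ω ∂μ, 0 ≤ S ω := by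
    have := (ae_all_iff).2 hval
    filter_upwards [this] with ω hω
    refine Finset.sum_nonneg (fun e _ => ?_)
    rcases hω e with h | h <;> simp [h]
    exact (hβc e).le
  have hint : Integrable (fun ω => Real.exp ((-1) * S ω)) μ := by
    refine Integrable.mono' (integrable_const 1)
      ((hSmeas.const_mul _).exp.aestronglyMeasurable) ?_
    filter_upwards [hSnonneg] with ω hω
    rw [Real.norm_eq_abs, abs_of_pos (Real.exp_pos _)]
    rw [Real.exp_le_one_iff]
    linarith
  -- Chernoff
  have hchern := measure_le_le_exp_mul_mgf (X := S) (μ := μ) (t := -1) Tp (by norm_num) hint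
  have hKfinal : Real.exp (-(-1) * Tp) * mgf S μ (-1) ≤ Real.exp (-(K - 1)) := by
    have h1 : Real.exp (-(-1) * Tp) * mgf S μ (-1) ≤ Real.exp Tp * Real.exp (-(K * Tp)) := by
      simp only [neg_neg, one_mul]
      refine mul_le_mul_of_nonneg_left hmgf_le (Real.exp_pos _).le
    refine h1.trans ?_
    rw [← Real.exp_add, Real.exp_le_exp]
    nlinarith
  have hfinal : (μ {ω | S ω ≤ Tp}).toReal ≤ Real.exp (-(K - 1)) := hchern.trans hKfinal
  calc μ {ω | ∑ e, βc e * X e ω < Tp} ≤ μ {ω | S ω ≤ Tp} := by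
        refine measure_mono (fun ω h => ?_)
        exact le_of_lt (show S ω < Tp from h)
    _ = ENNReal.ofReal (μ {ω | S ω ≤ Tp}).toReal := by
        rw [ENNReal.ofReal_toReal (measure_ne_top μ _)]
    _ ≤ ENNReal.ofReal (Real.exp (-(K - 1))) := ENNReal.ofReal_le_ofReal hfinal
end

section
/- (Success guarantee of the Linear Rounding algorithm.) Let E be a finite set, and for each e ∈ E let β_e be a positive real with β_e ≤ β (for some fixed real β > 0) and ρ_e ∈ (0,1). Let M ≥ 1 be a natural number, 0 < δ < 1, and set η = (β/(1 - e^{-β}))·(ln(M/δ) + 1); assume η·ρ_e < 1 for all e ∈ E. Let (X_e)_{e∈E} be independent Bernoulli random variables with Pr[X_e = 1] = η·ρ_e. Suppose there are M constraints, where constraint j (1 ≤ j ≤ M) is given by a finite subset S_j ⊆ E and a real T_j with 1 ≤ T_j ≤ ∑_{e∈S_j} β_e·ρ_e. Then with probability at least 1-δ, simultaneously for all j: ∑_{e∈S_j} β_e·X_e ≥ T_j. -/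
open MeasureTheory ProbabilityTheory

lemma aux_integral_exp_bernoulli {Ω : Type*} [MeasurableSpace Ω] (μ : Measure Ω)
    [IsProbabilityMeasure μ] (X : Ω → ℝ) (hX : Measurable X)
    (hval : ∀ᵐ ω ∂μ, X ω = 0 ∨ X ω = 1) (p : ℝ) (hp0 : 0 ≤ p)
    (hp : μ {ω | X ω = 1} = ENNReal.ofReal p) (s : ℝ) :
    ∫ ω, Real.exp (s * X ω) ∂μ = 1 + (Real.exp s - 1) * p := by
  have hA : MeasurableSet {ω | X ω = 1} := hX (measurableSet_singleton 1)
  have hcongr : (fun ω => Real.exp (s * X ω)) =ᵐ[μ]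
      fun ω => 1 + Set.indicator {ω | X ω = 1} (fun _ => Real.exp s - 1) ω := by
    filter_upwards [hval] with ω hω
    rcases hω with h0 | h1
    · have hmem : ω ∉ {ω | X ω = 1} := by simp [h0]
      simp [h0, Set.indicator_of_notMem hmem]
    · have hmem : ω ∈ {ω | X ω = 1} := h1
      simp [h1, Set.indicator_of_mem hmem]
  rw [integral_congr_ae hcongr, integral_add (integrable_const 1)
    ((integrable_const _).indicator hA), integral_const, integral_indicator_const _ hA]
  simp [hp, ENNReal.toReal_ofReal hp0, mul_comm, measureReal_def]

theorem stmt_18 {Ω : Type*} [MeasurableSpace Ω] (μ : Measure Ω) [IsProbabilityMeasure μ]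
    {E : Type*} [Fintype E]
    (β : ℝ) (hβ : 0 < β)
    (βc : E → ℝ) (hβc : ∀ e, 0 < βc e) (hβcβ : ∀ e, βc e ≤ β)
    (ρ : E → ℝ) (hρ0 : ∀ e, 0 < ρ e) (hρ1 : ∀ e, ρ e < 1)
    (M : ℕ) (hM : 1 ≤ M) (δ : ℝ) (hδ0 : 0 < δ) (hδ1 : δ < 1)
    (η : ℝ) (hη : η = β / (1 - Real.exp (-β)) * (Real.log ((M : ℝ) / δ) + 1))
    (hηρ : ∀ e, η * ρ e < 1)
    (X : E → Ω → ℝ) (hmeas : ∀ e, Measurable (X e))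
    (hindep : iIndepFun X μ)
    (hval : ∀ e, ∀ᵐ ω ∂μ, X e ω = 0 ∨ X e ω = 1)
    (hprob : ∀ e, μ {ω | X e ω = 1} = ENNReal.ofReal (η * ρ e))
    (S : Fin M → Finset E) (Tc : Fin M → ℝ)
    (hTc1 : ∀ j, 1 ≤ Tc j) (hTc2 : ∀ j, Tc j ≤ ∑ e ∈ S j, βc e * ρ e) :
    ENNReal.ofReal (1 - δ) ≤
      μ {ω | ∀ j : Fin M, Tc j ≤ ∑ e ∈ S j, βc e * X e ω} := by
  -- basic positivity facts
  have hMpos : (0:ℝ) < M := by exact_mod_cast Nat.lt_of_lt_of_le Nat.zero_lt_one hM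
  have hM1 : (1:ℝ) ≤ M := by exact_mod_cast hM
  have hexpβ : Real.exp (-β) < 1 := by
    calc Real.exp (-β) < Real.exp 0 := Real.exp_lt_exp.mpr (by linarith)
    _ = 1 := Real.exp_zero
  have h1eβ : 0 < 1 - Real.exp (-β) := by linarith
  have hMδ : (1:ℝ) < (M:ℝ) / δ := (one_lt_div hδ0).mpr (by linarith)
  have hMδpos : (0:ℝ) < (M:ℝ) / δ := by linarith
  have hlog : 0 < Real.log ((M:ℝ)/δ) := Real.log_pos hMδ
  have hηpos : 0 < η := by
    rw [hη]; exact mul_pos (div_pos hβ h1eβ) (by linarith)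
  -- key identity
  have hηid : η * (1 - Real.exp (-β)) / β = Real.log ((M:ℝ)/δ) + 1 := by
    rw [hη]; field_simp
  have hp0 : ∀ e, 0 ≤ η * ρ e := fun e => le_of_lt (mul_pos hηpos (hρ0 e))
  have hZmeas : ∀ e, Measurable (fun ω => βc e * X e ω) := fun e => (hmeas e).const_mul _
  have hYmeas : ∀ j : Fin M, Measurable (fun ω => ∑ e ∈ S j, βc e * X e ω) :=
    fun j => Finset.measurable_sum (S j) (fun e _ => hZmeas e)
  -- per-constraint Chernoff bound
  have key : ∀ j : Fin M,
      μ {ω | ∑ e ∈ S j, βc e * X e ω < Tc j} ≤ ENNReal.ofReal (δ / M) := by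
    intro j
    set Y : Ω → ℝ := fun ω => ∑ e ∈ S j, βc e * X e ω with hYdef
    have hvalall : ∀ᵐ ω ∂μ, ∀ e, X e ω = 0 ∨ X e ω = 1 := ae_all_iff.mpr hval
    have hYnn : ∀ᵐ ω ∂μ, 0 ≤ Y ω := by
      filter_upwards [hvalall] with ω hω
      apply Finset.sum_nonneg
      intro e _
      rcases hω e with h | h <;> simp [h, (hβc e).le]
    have h_int : Integrable (fun ω => Real.exp ((-1) * Y ω)) μ := by
      refine Integrable.mono' (integrable_const 1)
        (((hYmeas j).const_mul _).exp.aestronglyMeasurable) ?_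
      filter_upwards [hYnn] with ω hω
      rw [Real.norm_eq_abs, abs_of_pos (Real.exp_pos _)]
      have h1 : Real.exp (-1 * Y ω) ≤ Real.exp 0 := Real.exp_le_exp.mpr (by linarith)
      simpa using h1
    have hch := measure_le_le_exp_mul_mgf (μ := μ) (X := Y) (t := -1) (Tc j)
      (by norm_num) h_int
    -- mgf of the sum factors
    have hZindep : iIndepFun (fun e ω => βc e * X e ω) μ :=
      hindep.comp (fun e (x : ℝ) => βc e * x) (fun e => measurable_const_mul _)
    have hYsum : Y = ∑ e ∈ S j, (fun ω => βc e * X e ω) := by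
      funext ω; simp [hYdef, Finset.sum_apply]
    have hmgf : mgf Y μ (-1) = ∏ e ∈ S j, mgf (fun ω => βc e * X e ω) μ (-1) := by
      rw [hYsum]; exact hZindep.mgf_sum hZmeas (S j)
    -- each factor
    have hfac : ∀ e ∈ S j, mgf (fun ω => βc e * X e ω) μ (-1) ≤
        Real.exp (η * ρ e * (Real.exp (-βc e) - 1)) := by
      intro e _
      have heq : mgf (fun ω => βc e * X e ω) μ (-1)
          = 1 + (Real.exp (-βc e) - 1) * (η * ρ e) := by
        rw [mgf]
        have : (fun ω => Real.exp ((-1) * (βc e * X e ω)))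
            = fun ω => Real.exp ((-βc e) * X e ω) := by funext ω; ring_nf
        rw [show μ[fun ω => Real.exp ((-1) * (βc e * X e ω))]
            = ∫ ω, Real.exp ((-βc e) * X e ω) ∂μ by rw [← this]]
        exact aux_integral_exp_bernoulli μ (X e) (hmeas e) (hval e) _ (hp0 e) (hprob e) _
      rw [heq]
      have h1 := Real.add_one_le_exp ((Real.exp (-βc e) - 1) * (η * ρ e))
      calc 1 + (Real.exp (-βc e) - 1) * (η * ρ e) ≤
          Real.exp ((Real.exp (-βc e) - 1) * (η * ρ e)) := by linarith
        _ = Real.exp (η * ρ e * (Real.exp (-βc e) - 1)) := by ring_nf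
    have hprodle : ∏ e ∈ S j, mgf (fun ω => βc e * X e ω) μ (-1) ≤
        Real.exp (∑ e ∈ S j, η * ρ e * (Real.exp (-βc e) - 1)) := by
      rw [Real.exp_sum]
      exact Finset.prod_le_prod (fun e _ => mgf_nonneg) hfac
    -- convexity bound on the exponent
    have hconv : ∀ e : E, Real.exp (-βc e) - 1 ≤ (βc e / β) * (Real.exp (-β) - 1) := by
      intro e
      have ha : (0:ℝ) ≤ βc e / β := le_of_lt (div_pos (hβc e) hβ)
      have hb : (0:ℝ) ≤ 1 - βc e / β := by
        have : βc e / β ≤ 1 := (div_le_one hβ).mpr (hβcβ e)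
        linarith
      have hcv := convexOn_exp.2 (Set.mem_univ (-β)) (Set.mem_univ (0:ℝ)) ha hb (by ring)
      simp only [smul_eq_mul, mul_zero, add_zero, Real.exp_zero, mul_one] at hcv
      have hx : βc e / β * (-β) = -βc e := by field_simp
      rw [hx] at hcv
      nlinarith
    have hsumbound : ∑ e ∈ S j, η * ρ e * (Real.exp (-βc e) - 1) ≤
        -(Real.log ((M:ℝ)/δ) + 1) * Tc j := by
      have step1 : ∑ e ∈ S j, η * ρ e * (Real.exp (-βc e) - 1) ≤
          ∑ e ∈ S j, η * ρ e * ((βc e / β) * (Real.exp (-β) - 1)) :=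
        Finset.sum_le_sum (fun e _ =>
          mul_le_mul_of_nonneg_left (hconv e) (hp0 e))
      have step2 : ∑ e ∈ S j, η * ρ e * ((βc e / β) * (Real.exp (-β) - 1)) =
          (Real.exp (-β) - 1) / β * η * ∑ e ∈ S j, βc e * ρ e := by
        rw [Finset.mul_sum]
        apply Finset.sum_congr rfl
        intro e _
        field_simp
      have hcneg : (Real.exp (-β) - 1) / β * η ≤ 0 := by
        apply mul_nonpos_of_nonpos_of_nonneg
        · apply div_nonpos_of_nonpos_of_nonneg <;> linarith
        · linarith
      have step3 : (Real.exp (-β) - 1) / β * η * (∑ e ∈ S j, βc e * ρ e) ≤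
          (Real.exp (-β) - 1) / β * η * Tc j :=
        mul_le_mul_of_nonpos_left (hTc2 j) hcneg
      have step4 : (Real.exp (-β) - 1) / β * η = -(Real.log ((M:ℝ)/δ) + 1) := by
        rw [← hηid]; field_simp; ring
      calc ∑ e ∈ S j, η * ρ e * (Real.exp (-βc e) - 1)
          ≤ ∑ e ∈ S j, η * ρ e * ((βc e / β) * (Real.exp (-β) - 1)) := step1
        _ = (Real.exp (-β) - 1) / β * η * ∑ e ∈ S j, βc e * ρ e := step2
        _ ≤ (Real.exp (-β) - 1) / β * η * Tc j := step3
        _ = -(Real.log ((M:ℝ)/δ) + 1) * Tc j := by rw [step4]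
    -- combine
    have hfinal : (μ {ω | Y ω ≤ Tc j}).toReal ≤ δ / M := by
      have hc1 : (μ {ω | Y ω ≤ Tc j}).toReal ≤ Real.exp (Tc j) * mgf Y μ (-1) := by
        have h' : -(-1 : ℝ) * Tc j = Tc j := by ring
        rw [h'] at hch; exact hch
      have hc2 : mgf Y μ (-1) ≤ Real.exp (-(Real.log ((M:ℝ)/δ) + 1) * Tc j) := by
        rw [hmgf]
        exact hprodle.trans (Real.exp_le_exp.mpr hsumbound)
      have hc3 : Real.exp (Tc j) * mgf Y μ (-1) ≤
          Real.exp (Tc j + -(Real.log ((M:ℝ)/δ) + 1) * Tc j) := by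
        rw [Real.exp_add]
        exact mul_le_mul_of_nonneg_left hc2 (Real.exp_pos _).le
      have hc4 : Tc j + -(Real.log ((M:ℝ)/δ) + 1) * Tc j = -(Tc j * Real.log ((M:ℝ)/δ)) := by
        ring
      have hc5 : Real.exp (-(Tc j * Real.log ((M:ℝ)/δ))) ≤ δ / M := by
        have h1 : -(Tc j * Real.log ((M:ℝ)/δ)) ≤ -Real.log ((M:ℝ)/δ) := by
          nlinarith [hTc1 j]
        calc Real.exp (-(Tc j * Real.log ((M:ℝ)/δ))) ≤
            Real.exp (-Real.log ((M:ℝ)/δ)) := Real.exp_le_exp.mpr h1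
          _ = ((M:ℝ)/δ)⁻¹ := by rw [Real.exp_neg, Real.exp_log hMδpos]
          _ = δ / M := by rw [inv_div]
      calc (μ {ω | Y ω ≤ Tc j}).toReal ≤ Real.exp (Tc j) * mgf Y μ (-1) := hc1
        _ ≤ Real.exp (Tc j + -(Real.log ((M:ℝ)/δ) + 1) * Tc j) := hc3
        _ = Real.exp (-(Tc j * Real.log ((M:ℝ)/δ))) := by rw [hc4]
        _ ≤ δ / M := hc5
    calc μ {ω | Y ω < Tc j} ≤ μ {ω | Y ω ≤ Tc j} :=
        measure_mono (fun ω (h : Y ω < Tc j) => le_of_lt h)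
      _ = ENNReal.ofReal ((μ {ω | Y ω ≤ Tc j}).toReal) :=
        (ENNReal.ofReal_toReal (measure_ne_top μ _)).symm
      _ ≤ ENNReal.ofReal (δ / M) := ENNReal.ofReal_le_ofReal hfinal
  -- union bound
  set G : Set Ω := {ω | ∀ j : Fin M, Tc j ≤ ∑ e ∈ S j, βc e * X e ω} with hGdef
  have hGmeas : MeasurableSet G := by
    have : G = ⋂ j : Fin M, {ω | Tc j ≤ ∑ e ∈ S j, βc e * X e ω} := by
      ext ω; simp [hGdef]
    rw [this]
    exact MeasurableSet.iInter (fun j => measurableSet_le measurable_const (hYmeas j))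
  have hGc : Gᶜ = ⋃ j : Fin M, {ω | ∑ e ∈ S j, βc e * X e ω < Tc j} := by
    ext ω; simp [hGdef, not_le, not_forall]
  have hUnion : μ Gᶜ ≤ ENNReal.ofReal δ := by
    rw [hGc]
    calc μ (⋃ j : Fin M, {ω | ∑ e ∈ S j, βc e * X e ω < Tc j}) ≤
        ∑' j : Fin M, μ {ω | ∑ e ∈ S j, βc e * X e ω < Tc j} := measure_iUnion_le _
      _ = ∑ j : Fin M, μ {ω | ∑ e ∈ S j, βc e * X e ω < Tc j} := tsum_fintype _
      _ ≤ ∑ j : Fin M, ENNReal.ofReal (δ / M) := Finset.sum_le_sum (fun j _ => key j)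
      _ = M • ENNReal.ofReal (δ / M) := by
          rw [Finset.sum_const, Finset.card_univ, Fintype.card_fin]
      _ = ENNReal.ofReal ((M : ℝ) * (δ / M)) := by
          rw [nsmul_eq_mul, ← ENNReal.ofReal_natCast M,
            ← ENNReal.ofReal_mul (Nat.cast_nonneg M)]
      _ = ENNReal.ofReal δ := by
          congr 1
          field_simp
  have hcompl : μ G = 1 - μ Gᶜ := by
    have := prob_compl_eq_one_sub (μ := μ) hGmeas.compl
    rwa [compl_compl] at this
  have h1 : ENNReal.ofReal (1 - δ) = 1 - ENNReal.ofReal δ := by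
    rw [ENNReal.ofReal_sub 1 hδ0.le, ENNReal.ofReal_one]
  rw [hcompl, h1]
  exact tsub_le_tsub_left hUnion 1
end
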